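/- arXiv:math/0606777 — 4 statements merged into one kernel-verified Lean document; each statement's English description precedes it below -/
import Mathlib

section
/- Let (M, φ) be an arbitrary Dieudonné module over k and let t ≥ 1 be a natural number. Then the following are equivalent: (i) for every W(k)-linear automorphism g of M with (g − id_M)(M) ⊆ p^t·M, the Dieudonné modules (M, g∘φ) and (M, φ) are isomorphic; (ii) every Dieudonné module (M₁, φ₁) over k whose level-t truncation is isomorphic to the level-t truncation of (M, φ) is isomorphic to (M, φ). In particular, the smallest t satisfying (i) equals the smallest n satisfying (ii). -/
open WittVector

section Defs

variable (p : ℕ) [Fact p.Prime] (k : Type) [CommRing k] [CharP k p]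

/-- `φ` is `σ`-semilinear, where `σ` is the Witt vector Frobenius of `W(k)`. -/
def IsFrobSemilinear (M : Type) [AddCommGroup M] [Module (WittVector p k) M]
    (φ : M →+ M) : Prop :=
  ∀ (a : WittVector p k) (m : M), φ (a • m) = WittVector.frobenius a • φ m

/-- `(M, φ)` is a Dieudonné module: `φ` is `σ`-semilinear and `p·M ⊆ φ(M) ⊆ M`. -/
def IsDieudonne (M : Type) [AddCommGroup M] [Module (WittVector p k) M]
    (φ : M →+ M) : Prop :=
  IsFrobSemilinear p k M φ ∧ ∀ m : M, ∃ m' : M, φ m' = (p : WittVector p k) • m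

/-- `ϑ` is the Verschiebung of `(M, φ)`, i.e. `φ∘ϑ = ϑ∘φ = p·id_M`. -/
def IsVerschiebung (M : Type) [AddCommGroup M] [Module (WittVector p k) M]
    (φ ϑ : M →+ M) : Prop :=
  ∀ m : M, φ (ϑ m) = (p : WittVector p k) • m ∧ ϑ (φ m) = (p : WittVector p k) • m

/-- The submodule `p^s · M` of `M`. -/
noncomputable def pPowSub (M : Type) [AddCommGroup M] [Module (WittVector p k) M] (s : ℕ) :
    Submodule (WittVector p k) M :=
  LinearMap.range (((p : WittVector p k)^s) • (LinearMap.id : M →ₗ[WittVector p k] M))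

/-- The level-`s` truncations of `(M₁, φ₁, ϑ₁)` and `(M, φ, ϑ)` are isomorphic: there is a
`W(k)/(p^s)`-linear bijection `M₁/p^s·M₁ → M/p^s·M` commuting with the maps induced by the
`φ`'s and by the `ϑ`'s. -/
def TruncIso (M₁ : Type) [AddCommGroup M₁] [Module (WittVector p k) M₁]
    (M : Type) [AddCommGroup M] [Module (WittVector p k) M]
    (s : ℕ) (φ₁ ϑ₁ : M₁ →+ M₁) (φ ϑ : M →+ M) : Prop :=
  ∃ h : (M₁ ⧸ pPowSub p k M₁ s) ≃ₗ[WittVector p k] (M ⧸ pPowSub p k M s),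
    (∀ (x : M₁) (y : M), h (Submodule.Quotient.mk x) = Submodule.Quotient.mk y →
        h (Submodule.Quotient.mk (φ₁ x)) = Submodule.Quotient.mk (φ y)) ∧
    (∀ (x : M₁) (y : M), h (Submodule.Quotient.mk x) = Submodule.Quotient.mk y →
        h (Submodule.Quotient.mk (ϑ₁ x)) = Submodule.Quotient.mk (ϑ y))

/-- `(M₁, φ₁)` and `(M, φ)` are isomorphic Dieudonné modules. -/
def DIso (M₁ : Type) [AddCommGroup M₁] [Module (WittVector p k) M₁]
    (M : Type) [AddCommGroup M] [Module (WittVector p k) M]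
    (φ₁ : M₁ →+ M₁) (φ : M →+ M) : Prop :=
  ∃ h : M₁ ≃ₗ[WittVector p k] M, ∀ x : M₁, h (φ₁ x) = φ (h x)

/-- `(M, φ)` is determined up to isomorphism by its level-`s` truncation: every Dieudonné
module over `k` whose level-`s` truncation is isomorphic to that of `(M, φ)` is isomorphic
to `(M, φ)`. -/
def DeterminedAt (M : Type) [AddCommGroup M] [Module (WittVector p k) M]
    (φ ϑ : M →+ M) (s : ℕ) : Prop :=
  ∀ (M₁ : Type) [AddCommGroup M₁] [Module (WittVector p k) M₁]
    [Module.Free (WittVector p k) M₁] [Module.Finite (WittVector p k) M₁]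
    (φ₁ ϑ₁ : M₁ →+ M₁), IsDieudonne p k M₁ φ₁ → IsVerschiebung p k M₁ φ₁ ϑ₁ →
    TruncIso p k M₁ M s φ₁ ϑ₁ φ ϑ → DIso p k M₁ M φ₁ φ

end Defs

set_option linter.unusedSectionVars false
set_option maxHeartbeats 1000000

namespace GD

variable {p : ℕ} [Fact p.Prime] {k : Type} [Field k] [IsAlgClosed k] [CharP k p]

local notation "W" => WittVector p k

instance : IsDiscreteValuationRing (WittVector p k) := WittVector.isDiscreteValuationRing

lemma pW_ne_zero : (p : W) ≠ 0 := (WittVector.irreducible p).ne_zero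

lemma pW_not_unit : ¬ IsUnit (p : W) := (WittVector.irreducible p).not_isUnit

variable {M : Type} [AddCommGroup M] [Module (WittVector p k) M]
  [Module.Free (WittVector p k) M] [Module.Finite (WittVector p k) M]

lemma sep {x : M} (h : ∀ n : ℕ, ∃ y : M, x = (p : W)^n • y) : x = 0 := by
  have hne : (Ideal.span {(p : W)} : Ideal W) ≠ ⊤ := by
    simp only [ne_eq, Ideal.span_singleton_eq_top]; exact pW_not_unit
  have hb := Ideal.iInf_pow_smul_eq_bot_of_isLocalRing
    (I := Ideal.span {(p : W)}) (M := M) hne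
  rw [eq_bot_iff] at hb
  refine (Submodule.mem_bot _).mp (hb ?_)
  rw [Submodule.mem_iInf]
  intro n
  obtain ⟨y, rfl⟩ := h n
  refine Submodule.smul_mem_smul ?_ trivial
  rw [Ideal.span_singleton_pow]
  exact Ideal.subset_span rfl

lemma psmul_cancel {n : ℕ} {x y : M} (h : (p : W)^n • x = (p : W)^n • y) : x = y :=
  smul_right_injective M (pow_ne_zero n pW_ne_zero) h


section TwoMods

variable {M₁ : Type} [AddCommGroup M₁] [Module (WittVector p k) M₁]
  [Module.Free (WittVector p k) M₁] [Module.Finite (WittVector p k) M₁]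

lemma inj_of {s : ℕ} (hs : 1 ≤ s) (f : M₁ →ₗ[W] M)
    (h : ∀ x : M₁, f x = 0 → ∃ y, x = (p : W)^s • y) : Function.Injective f := by
  have key : ∀ x : M₁, f x = 0 → x = 0 := by
    have main : ∀ n : ℕ, ∀ x : M₁, f x = 0 → ∃ y, f y = 0 ∧ x = (p : W)^n • y := by
      intro n
      induction n with
      | zero => exact fun x hx => ⟨x, hx, by simp⟩
      | succ n ih =>
        intro x hx
        obtain ⟨y, hy, rfl⟩ := ih x hx
        obtain ⟨z, rfl⟩ := h y hy
        have hz : f z = 0 := by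
          have h2 : (p : W)^s • f z = 0 := by rw [← map_smul, hy]
          rcases smul_eq_zero.mp h2 with h' | h'
          · exact absurd h' (pow_ne_zero s pW_ne_zero)
          · exact h'
        refine ⟨(p : W)^(s-1) • z, by rw [map_smul, hz, smul_zero], ?_⟩
        rw [smul_smul, smul_smul, ← pow_add, ← pow_add]
        congr 2
        omega
    intro x hx
    refine sep (p := p) (k := k) (fun n => ?_)
    obtain ⟨y, _, hxy⟩ := main n x hx
    exact ⟨y, hxy⟩
  intro a b hab
  have h0 : f (a - b) = 0 := by rw [map_sub, hab, sub_self]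
  have := key _ h0
  rwa [sub_eq_zero] at this

lemma surj_of {s : ℕ} (hs : 1 ≤ s) (f : M₁ →ₗ[W] M)
    (h : ∀ m : M, ∃ x z, m = f x + (p : W)^s • z) : Function.Surjective f := by
  have hle : (⊤ : Submodule W M) ≤ LinearMap.range f := by
    refine Submodule.le_of_le_smul_of_le_jacobson_bot
      (I := Ideal.span {(p : W)}) (Module.finite_def.mp (inferInstance : Module.Finite W M)) ?_ ?_
    · rw [IsLocalRing.jacobson_eq_maximalIdeal ⊥ bot_ne_top]
      rw [Ideal.span_le, Set.singleton_subset_iff]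
      show (p : W) ∈ IsLocalRing.maximalIdeal W
      rw [IsLocalRing.mem_maximalIdeal, mem_nonunits_iff]
      exact pW_not_unit
    · intro m _
      obtain ⟨x, z, rfl⟩ := h m
      refine Submodule.add_mem_sup (LinearMap.mem_range_self f x) ?_
      have : (p : W)^s • z = (p : W) • ((p : W)^(s-1) • z) := by
        rw [smul_smul, ← pow_succ']
        congr 2
        omega
      rw [this]
      exact Submodule.smul_mem_smul (Ideal.subset_span rfl) trivial
  intro m
  exact hle trivial

end TwoMods

end GD

namespace GD

variable {p : ℕ} [Fact p.Prime] {k : Type} [Field k] [IsAlgClosed k] [CharP k p]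

local notation "W" => WittVector p k

lemma frob_pow (n : ℕ) : WittVector.frobenius ((p : W)^n) = (p : W)^n := by
  rw [map_pow, map_natCast]

lemma frobEquiv_symm_pow (n : ℕ) :
    (WittVector.frobeniusEquiv p k).symm ((p : W)^n) = (p : W)^n := by
  rw [map_pow, map_natCast]

variable {M : Type} [AddCommGroup M] [Module (WittVector p k) M]
  [Module.Free (WittVector p k) M] [Module.Finite (WittVector p k) M]
  {φ ϑ : M →+ M}

lemma mem_pPowSub {s : ℕ} {x : M} :
    x ∈ pPowSub p k M s ↔ ∃ y, x = (p : W)^s • y := by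
  constructor
  · rintro ⟨y, rfl⟩
    exact ⟨y, by simp⟩
  · rintro ⟨y, rfl⟩
    exact ⟨y, by simp⟩

lemma phi_psmul (hsl : IsFrobSemilinear p k M φ) (n : ℕ) (m : M) :
    φ ((p : W)^n • m) = (p : W)^n • φ m := by
  rw [hsl, frob_pow]

lemma phi_inj (hV : IsVerschiebung p k M φ ϑ) : Function.Injective φ := by
  intro a b h
  have h2 : (p : W) • a = (p : W) • b := by rw [← (hV a).2, ← (hV b).2, h]
  exact smul_right_injective M pW_ne_zero h2

lemma theta_inj (hV : IsVerschiebung p k M φ ϑ) : Function.Injective ϑ := by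
  intro a b h
  have h2 : (p : W) • a = (p : W) • b := by rw [← (hV a).1, ← (hV b).1, h]
  exact smul_right_injective M pW_ne_zero h2

lemma theta_semilinear (hsl : IsFrobSemilinear p k M φ) (hV : IsVerschiebung p k M φ ϑ)
    (a : W) (m : M) : ϑ (a • m) = (WittVector.frobeniusEquiv p k).symm a • ϑ m := by
  apply phi_inj hV
  rw [(hV _).1, hsl]
  have : WittVector.frobenius ((WittVector.frobeniusEquiv p k).symm a) = a :=
    (WittVector.frobeniusEquiv p k).apply_symm_apply a
  rw [this, (hV m).1, smul_smul, smul_smul, mul_comm]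

lemma theta_psmul (hsl : IsFrobSemilinear p k M φ) (hV : IsVerschiebung p k M φ ϑ)
    (n : ℕ) (m : M) : ϑ ((p : W)^n • m) = (p : W)^n • ϑ m := by
  rw [theta_semilinear hsl hV, frobEquiv_symm_pow]

end GD

namespace GD

variable {p : ℕ} [Fact p.Prime] {k : Type} [Field k] [IsAlgClosed k] [CharP k p]

local notation "W" => WittVector p k

variable {M : Type} [AddCommGroup M] [Module (WittVector p k) M]
  [Module.Free (WittVector p k) M] [Module.Finite (WittVector p k) M]

lemma determined_implies_gauge {φ ϑ : M →+ M} (hφ : IsDieudonne p k M φ)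
    (hϑ : IsVerschiebung p k M φ ϑ) {t : ℕ} (ht : 1 ≤ t)
    (hdet : DeterminedAt p k M φ ϑ t) :
    ∀ g : M ≃ₗ[W] M, (∀ x : M, ∃ y : M, g x - x = ((p : W)^t) • y) →
      ∃ h : M ≃ₗ[W] M, ∀ x : M, h (g (φ x)) = φ (h x) := by
  intro g hg
  set φ₁ : M →+ M := (g.toLinearMap.toAddMonoidHom).comp φ with hφ₁def
  set ϑ₁ : M →+ M := ϑ.comp (g.symm.toLinearMap.toAddMonoidHom) with hϑ₁def
  have hφ₁app : ∀ x, φ₁ x = g (φ x) := fun x => rfl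
  have hϑ₁app : ∀ x, ϑ₁ x = ϑ (g.symm x) := fun x => rfl
  have hφ₁ : IsDieudonne p k M φ₁ := by
    constructor
    · intro a m
      rw [hφ₁app, hφ.1, map_smul, hφ₁app]
    · intro m
      obtain ⟨m', hm'⟩ := hφ.2 (g.symm m)
      refine ⟨m', ?_⟩
      rw [hφ₁app, hm', map_smul, g.apply_symm_apply]
  have hϑ₁ : IsVerschiebung p k M φ₁ ϑ₁ := by
    intro m
    constructor
    · rw [hϑ₁app, hφ₁app, (hϑ _).1, map_smul, g.apply_symm_apply]
    · rw [hφ₁app, hϑ₁app, g.symm_apply_apply, (hϑ m).2]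
  have hginv : ∀ x : M, ∃ y : M, g.symm x - x = ((p : W)^t) • y := by
    intro x
    obtain ⟨y, hy⟩ := hg (g.symm x)
    refine ⟨-y, ?_⟩
    rw [g.apply_symm_apply] at hy
    rw [smul_neg, ← hy]
    abel
  have htr : TruncIso p k M M t φ₁ ϑ₁ φ ϑ := by
    refine ⟨LinearEquiv.refl W _, ?_, ?_⟩
    · intro x y hxy
      simp only [LinearEquiv.refl_apply] at hxy ⊢
      rw [Submodule.Quotient.eq] at hxy ⊢
      obtain ⟨z, hz⟩ := mem_pPowSub.mp hxy
      obtain ⟨w, hw⟩ := hg (φ x)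
      refine mem_pPowSub.mpr ⟨w + φ z, ?_⟩
      have : φ x - φ y = (p : W)^t • φ z := by
        rw [← map_sub, hz, phi_psmul hφ.1]
      rw [hφ₁app, smul_add, ← hw, ← this]
      abel
    · intro x y hxy
      simp only [LinearEquiv.refl_apply] at hxy ⊢
      rw [Submodule.Quotient.eq] at hxy ⊢
      obtain ⟨z, hz⟩ := mem_pPowSub.mp hxy
      obtain ⟨w, hw⟩ := hginv x
      refine mem_pPowSub.mpr ⟨ϑ (w + z), ?_⟩
      rw [hϑ₁app, ← theta_psmul hφ.1 hϑ, ← map_sub]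
      congr 1
      have h3 : g.symm x - y = (g.symm x - x) + (x - y) := by abel
      rw [h3, hw, hz, ← smul_add]
  obtain ⟨h, hh⟩ := hdet M φ₁ ϑ₁ hφ₁ hϑ₁ htr
  exact ⟨h, fun x => by rw [← hφ₁app, hh]⟩

end GD

namespace GD

variable {p : ℕ} [Fact p.Prime] {k : Type} [Field k] [IsAlgClosed k] [CharP k p]

local notation "W" => WittVector p k

variable {M : Type} [AddCommGroup M] [Module (WittVector p k) M]
  [Module.Free (WittVector p k) M] [Module.Finite (WittVector p k) M]

lemma exists_c {φ ϑ : M →+ M} (hφ : IsDieudonne p k M φ) (hϑ : IsVerschiebung p k M φ ϑ)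
    (A₀ : M → M) (hadd : ∀ x y, A₀ (x + y) = A₀ x + A₀ y)
    (hsl : ∀ (a : W) (m : M), A₀ (a • m) = WittVector.frobenius a • A₀ m)
    (hAth : ∀ w : M, ∃ v z, A₀ (ϑ w) = φ v + (p : W) • z) :
    ∃ c : M →ₗ[W] M, ∀ m : M, ∃ z, ϑ (A₀ m + c (φ m)) = (p : W) • z := by
  classical
  have hinj := phi_inj hϑ
  set τ := (WittVector.frobeniusEquiv p k).symm with hτ
  have hστ : ∀ a : W, WittVector.frobenius (τ a) = a := fun a =>
    (WittVector.frobeniusEquiv p k).apply_symm_apply a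
  set Nφ : Submodule W M :=
    { carrier := Set.range φ
      add_mem' := by rintro x' y' ⟨x, rfl⟩ ⟨y, rfl⟩; exact ⟨x + y, map_add φ x y⟩
      zero_mem' := ⟨0, map_zero φ⟩
      smul_mem' := by
        rintro a x' ⟨x, rfl⟩
        exact ⟨τ a • x, by rw [hφ.1, hστ]⟩ } with hNφ
  have hmemN : ∀ m : M, φ m ∈ Nφ := fun m => ⟨m, rfl⟩
  -- the "inverse of φ" on Nφ
  have hexρ : ∀ y : Nφ, ∃ x, φ x = (y : M) := fun y => y.2
  set ρ : Nφ → M := fun y => (hexρ y).choose with hρdef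
  have hρ : ∀ y : Nφ, φ (ρ y) = (y : M) := fun y => (hexρ y).choose_spec
  have hρadd : ∀ y z : Nφ, ρ (y + z) = ρ y + ρ z := by
    intro y z; apply hinj; rw [hρ, map_add, hρ, hρ]; rfl
  have hρsmul : ∀ (a : W) (y : Nφ), ρ (a • y) = τ a • ρ y := by
    intro a y; apply hinj; rw [hρ, hφ.1, hστ, hρ]; rfl
  obtain ⟨b⟩ := (Module.Free.exists_basis (R := W) (M := M))
  obtain ⟨ι, b⟩ := b
  have : Finite ι := Module.Finite.finite_basis b
  obtain ⟨n, snf⟩ := Nφ.smithNormalForm b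
  set val : Fin n → M := fun j =>
    if hu : ∃ bb : W, snf.a j * bb = 1 then hu.choose • (-(A₀ (ρ (snf.bN j)))) else 0 with hval
  set vfun : ι → M := fun i => if h : ∃ j, snf.f j = i then val h.choose else 0 with hvfun
  set c : M →ₗ[W] M := snf.bM.constr ℕ vfun with hc
  have hcbN : ∀ j : Fin n, c (snf.bN j) = snf.a j • val j := by
    intro j
    rw [snf.snf j, map_smul]
    congr 1
    have hex : ∃ j', snf.f j' = snf.f j := ⟨j, rfl⟩
    have : c (snf.bM (snf.f j)) = vfun (snf.f j) := snf.bM.constr_basis ℕ vfun (snf.f j)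
    rw [this, hvfun]
    simp only [dif_pos hex]
    congr 1
    exact snf.f.injective hex.choose_spec
  -- the key pointwise bound on basis vectors of Nφ
  have key : ∀ j : Fin n, ∃ z, ϑ (A₀ (ρ (snf.bN j)) + c (snf.bN j)) = (p : W) • z := by
    intro j
    by_cases hu : ∃ bb : W, snf.a j * bb = 1
    · refine ⟨0, ?_⟩
      rw [hcbN j, hval]
      simp only [dif_pos hu]
      have h1 : snf.a j • (hu.choose • (-(A₀ (ρ (snf.bN j))))) = -(A₀ (ρ (snf.bN j))) := by
        rw [smul_smul, hu.choose_spec, one_smul]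
      rw [h1, add_neg_cancel, map_zero, smul_zero]
    · have hu' : ¬ IsUnit (snf.a j) := fun h => hu (h.exists_right_inv)
      have h1 : snf.a j ∈ IsLocalRing.maximalIdeal W := by
        rw [IsLocalRing.mem_maximalIdeal, mem_nonunits_iff]; exact hu'
      rw [(WittVector.irreducible p).maximalIdeal_eq, Ideal.mem_span_singleton] at h1
      obtain ⟨e, he⟩ := h1
      have hw : ρ (snf.bN j) = ϑ (e • snf.bM (snf.f j)) := by
        apply hinj
        rw [hρ, (hϑ _).1, snf.snf j, he, smul_smul]
      obtain ⟨v, z, hvz⟩ := hAth (e • snf.bM (snf.f j))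
      refine ⟨v + ϑ z, ?_⟩
      rw [hcbN j, hval]
      simp only [dif_neg hu, smul_zero, add_zero]
      rw [hw, hvz, map_add, (hϑ v).2, smul_add]
      congr 1
      have := theta_psmul hφ.1 hϑ 1 z
      simpa using this
  -- assemble: linear map D on Nφ
  set D : Nφ →ₗ[W] M :=
    { toFun := fun y => A₀ (ρ y) + c (y : M)
      map_add' := by
        intro y z
        show A₀ (ρ (y + z)) + c ((y + z : Nφ) : M) = _
        rw [hρadd, hadd, Submodule.coe_add, map_add]
        abel
      map_smul' := by
        intro a y
        show A₀ (ρ (a • y)) + c ((a • y : Nφ) : M) = _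
        rw [hρsmul, hsl, hστ, Submodule.coe_smul, map_smul, smul_add]
        rfl } with hD
  have keyD : ∀ y : Nφ, ∃ z, ϑ (D y) = (p : W) • z := by
    set S : Submodule W Nφ :=
      { carrier := {y | ∃ z, ϑ (D y) = (p : W) • z}
        zero_mem' := ⟨0, by rw [map_zero, map_zero, smul_zero]⟩
        add_mem' := by
          rintro y z ⟨zy, hzy⟩ ⟨zz, hzz⟩
          exact ⟨zy + zz, by rw [map_add, map_add, hzy, hzz, smul_add]⟩
        smul_mem' := by
          rintro a y ⟨z, hz⟩
          refine ⟨τ a • z, ?_⟩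
          rw [map_smul, theta_semilinear hφ.1 hϑ, hz, smul_comm] } with hS
    have hbNS : ∀ j, snf.bN j ∈ S := fun j => key j
    have htop : (⊤ : Submodule W Nφ) ≤ S := by
      rw [← snf.bN.span_eq]
      rw [Submodule.span_le]
      rintro _ ⟨j, rfl⟩
      exact hbNS j
    exact fun y => htop trivial
  refine ⟨c, fun m => ?_⟩
  have hy : ρ ⟨φ m, hmemN m⟩ = m := hinj (by rw [hρ])
  have := keyD ⟨φ m, hmemN m⟩
  rw [hD] at this
  simpa [hy] using this

end GD

namespace GD

variable {p : ℕ} [Fact p.Prime] {k : Type} [Field k] [IsAlgClosed k] [CharP k p]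

local notation "W" => WittVector p k

variable {M : Type} [AddCommGroup M] [Module (WittVector p k) M]
  [Module.Free (WittVector p k) M] [Module.Finite (WittVector p k) M]

lemma gauge_implies_determined {φ ϑ : M →+ M} (hφ : IsDieudonne p k M φ)
    (hϑ : IsVerschiebung p k M φ ϑ) {t : ℕ} (ht : 1 ≤ t)
    (hg : ∀ g : M ≃ₗ[W] M, (∀ x : M, ∃ y : M, g x - x = ((p : W)^t) • y) →
      ∃ h : M ≃ₗ[W] M, ∀ x : M, h (g (φ x)) = φ (h x)) :
    DeterminedAt p k M φ ϑ t := by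
  classical
  intro M₁ _ _ _ _ φ₁ ϑ₁ hφ₁ hϑ₁ htr
  obtain ⟨hbar, hbφ, hbϑ⟩ := htr
  have hptpow : (p : W)^t = (p : W) * (p : W)^(t-1) := by
    rw [← pow_succ']
    congr 1
    omega
  -- Step 1 : lift hbar to a linear bijection h₀ : M₁ → M
  obtain ⟨bs⟩ := Module.Free.exists_basis (R := W) (M := M₁)
  obtain ⟨ι, b₁⟩ := bs
  have hyex : ∀ i : ι, ∃ y : M, Submodule.Quotient.mk y = hbar (Submodule.Quotient.mk (b₁ i)) :=
    fun i => Submodule.Quotient.mk_surjective _ _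
  set h₀ : M₁ →ₗ[W] M := b₁.constr ℕ (fun i => (hyex i).choose) with hh₀
  have hmk : ∀ x : M₁, Submodule.Quotient.mk (h₀ x) = hbar (Submodule.Quotient.mk x) := by
    have heq : (pPowSub p k M t).mkQ.comp h₀ =
        (hbar : (M₁ ⧸ pPowSub p k M₁ t) →ₗ[W] (M ⧸ pPowSub p k M t)).comp
          (pPowSub p k M₁ t).mkQ := by
      apply b₁.ext
      intro i
      simp only [LinearMap.comp_apply, Submodule.mkQ_apply, hh₀, Module.Basis.constr_basis]
      exact (hyex i).choose_spec
    intro x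
    have := congrArg (fun f => f x) heq
    simpa using this
  have hbij₀ : Function.Bijective h₀ := by
    constructor
    · refine inj_of (p := p) (k := k) ht h₀ (fun x hx => ?_)
      have h1 : hbar (Submodule.Quotient.mk x) = 0 := by
        rw [← hmk, hx, Submodule.Quotient.mk_eq_zero]
        exact Submodule.zero_mem _
      rw [LinearEquiv.map_eq_zero_iff, Submodule.Quotient.mk_eq_zero] at h1
      exact mem_pPowSub.mp h1
    · refine surj_of (p := p) (k := k) ht h₀ (fun m => ?_)
      obtain ⟨x, hx⟩ := Submodule.Quotient.mk_surjective (pPowSub p k M₁ t)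
        (hbar.symm (Submodule.Quotient.mk m))
      have h1 : Submodule.Quotient.mk (h₀ x) = (Submodule.Quotient.mk m :
          M ⧸ pPowSub p k M t) := by
        rw [hmk, hx, LinearEquiv.apply_symm_apply]
      rw [Submodule.Quotient.eq] at h1
      obtain ⟨z, hz⟩ := mem_pPowSub.mp h1
      exact ⟨x, -z, by rw [smul_neg, ← hz]; abel⟩
  set e₀ : M₁ ≃ₗ[W] M := LinearEquiv.ofBijective h₀ hbij₀ with he₀
  have he₀app : ∀ x : M₁, e₀ x = h₀ x := fun x => rfl
  clear he₀ hh₀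
  clear_value e₀ h₀
  clear hyex
  -- Step 2 : the defect maps A and B
  have hAex : ∀ x : M₁, ∃ z : M, h₀ (φ₁ x) - φ (h₀ x) = (p : W)^t • z := by
    intro x
    have h1 := hbφ x (h₀ x) (hmk x).symm
    rw [← hmk, Submodule.Quotient.eq] at h1
    exact mem_pPowSub.mp h1
  have hBex : ∀ x : M₁, ∃ z : M, h₀ (ϑ₁ x) - ϑ (h₀ x) = (p : W)^t • z := by
    intro x
    have h1 := hbϑ x (h₀ x) (hmk x).symm
    rw [← hmk, Submodule.Quotient.eq] at h1
    exact mem_pPowSub.mp h1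
  set A : M₁ → M := fun x => (hAex x).choose with hA
  set B : M₁ → M := fun x => (hBex x).choose with hB
  have hAs : ∀ x : M₁, (p : W)^t • A x = h₀ (φ₁ x) - φ (h₀ x) :=
    fun x => ((hAex x).choose_spec).symm
  have hBs : ∀ x : M₁, (p : W)^t • B x = h₀ (ϑ₁ x) - ϑ (h₀ x) :=
    fun x => ((hBex x).choose_spec).symm
  clear hA hB
  clear_value A B
  have hAadd : ∀ x y : M₁, A (x + y) = A x + A y := by
    intro x y
    refine psmul_cancel (p := p) (k := k) (n := t) ?_
    rw [hAs, smul_add, hAs, hAs]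
    simp only [map_add]
    abel
  have hAsl : ∀ (a : W) (x : M₁), A (a • x) = WittVector.frobenius a • A x := by
    intro a x
    refine psmul_cancel (p := p) (k := k) (n := t) ?_
    have hthis := hAs (a • x)
    rw [hφ₁.1, map_smul, map_smul, hφ.1, ← smul_sub, ← hAs] at hthis
    rw [hthis, smul_comm]
  have hAneg : ∀ x : M₁, A (-x) = -(A x) := by
    intro x
    have h0 : A 0 = 0 := by
      refine psmul_cancel (p := p) (k := k) (n := t) ?_
      rw [hAs]
      simp
    have h2 := hAadd x (-x)
    rw [add_neg_cancel, h0] at h2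
    exact eq_neg_of_add_eq_zero_right h2.symm
  have hR1 : ∀ x : M₁, A (ϑ₁ x) = -(φ (B x)) := by
    intro x
    refine psmul_cancel (p := p) (k := k) (n := t) ?_
    rw [hAs, (hϑ₁ x).1, map_smul]
    have h1 : h₀ (ϑ₁ x) = ϑ (h₀ x) + (p : W)^t • B x := by
      rw [add_comm]
      exact sub_eq_iff_eq_add.mp (hBs x).symm
    rw [h1, map_add, (hϑ (h₀ x)).1, phi_psmul hφ.1, smul_neg]
    abel
  -- Step 3 : the corrected defect A₀ on M and the endomorphism c
  set A₀ : M → M := fun m => A (e₀.symm m) with hA₀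
  have hA₀app : ∀ m : M, A₀ m = A (e₀.symm m) := fun m => rfl
  have hA₀add : ∀ x y : M, A₀ (x + y) = A₀ x + A₀ y := by
    intro x y
    rw [hA₀app, hA₀app, hA₀app, map_add, hAadd]
  have hA₀sl : ∀ (a : W) (m : M), A₀ (a • m) = WittVector.frobenius a • A₀ m := by
    intro a m
    rw [hA₀app, hA₀app, map_smul, hAsl]
  have hAth : ∀ w : M, ∃ v z, A₀ (ϑ w) = φ v + (p : W) • z := by
    intro w
    set x := e₀.symm w with hx
    have h1 : h₀ (ϑ₁ x) = ϑ (h₀ x) + (p : W)^t • B x := by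
      rw [add_comm]
      exact sub_eq_iff_eq_add.mp (hBs x).symm
    have h2 : h₀ x = w := by rw [← he₀app, hx, e₀.apply_symm_apply]
    have h3 : e₀.symm (ϑ w) = ϑ₁ x - (p : W)^t • e₀.symm (B x) := by
      apply e₀.injective
      rw [e₀.apply_symm_apply, map_sub, map_smul, e₀.apply_symm_apply, he₀app, h1, h2]
      abel
    refine ⟨-(B x), -((p : W)^(t-1) • A (e₀.symm (B x))), ?_⟩
    have h4 : A₀ (ϑ w) = A (ϑ₁ x - (p : W)^t • e₀.symm (B x)) := by rw [hA₀app, h3]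
    have h5 : ϑ₁ x - (p : W)^t • e₀.symm (B x) = ϑ₁ x + (-((p : W)^t • e₀.symm (B x))) := by
      abel
    rw [h4, h5, hAadd, hAneg, hAsl, hR1, frob_pow, map_neg, smul_neg, smul_smul, ← hptpow]
  obtain ⟨c, hc⟩ := exists_c hφ hϑ A₀ hA₀add hA₀sl hAth
  -- Step 4 : the corrected lift h' and the twisted map ψ'
  set G : M →ₗ[W] M := LinearMap.id + ((p : W)^t) • c with hG
  have hGapp : ∀ m : M, G m = m + (p : W)^t • c m := by
    intro m
    rw [hG]
    simp only [LinearMap.add_apply, LinearMap.smul_apply, LinearMap.id_apply]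
  have hGbij : Function.Bijective G := by
    constructor
    · refine inj_of (p := p) (k := k) ht G (fun m hm => ?_)
      rw [hGapp] at hm
      exact ⟨-(c m), by rw [smul_neg]; exact (neg_eq_of_add_eq_zero_left hm).symm⟩
    · refine surj_of (p := p) (k := k) ht G (fun m => ?_)
      exact ⟨m, -(c m), by rw [hGapp, smul_neg]; abel⟩
  set eG : M ≃ₗ[W] M := LinearEquiv.ofBijective G hGbij with heG
  have heGapp : ∀ m : M, eG m = G m := fun m => rfl
  clear heG hG
  clear_value eG G
  set h' : M₁ ≃ₗ[W] M := e₀.trans eG with hh'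
  set ψ' : M → M := fun m => h' (φ₁ (h'.symm m)) with hψ'
  have hψ'app : ∀ m : M, ψ' m = h' (φ₁ (h'.symm m)) := fun m => rfl
  have hψ'add : ∀ m m' : M, ψ' (m + m') = ψ' m + ψ' m' := by
    intro m m'
    rw [hψ'app, hψ'app, hψ'app, map_add, map_add, map_add]
  have hψ'sl : ∀ (a : W) (m : M), ψ' (a • m) = WittVector.frobenius a • ψ' m := by
    intro a m
    rw [hψ'app, hψ'app, map_smul, hφ₁.1, map_smul]
  -- Step 5 : key congruences for ψ' - φ
  have hkey : ∀ m : M, ∃ E : M, ψ' m - φ m = (p : W)^t • E ∧ ∃ w : M, ϑ E = (p : W) • w := by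
    intro m
    set nn : M := eG.symm m with hnn
    set x : M₁ := e₀.symm nn with hx
    have hsymm : h'.symm m = x := by
      rw [hh', LinearEquiv.symm_trans_apply, ← hnn, ← hx]
    have hh₀x : h₀ x = nn := by rw [← he₀app, hx, e₀.apply_symm_apply]
    have hm : m = nn + (p : W)^t • c nn := by
      rw [hnn, ← hGapp, ← heGapp, eG.apply_symm_apply]
    have hψ'm : ψ' m = φ nn + (p : W)^t • A x + (p : W)^t • c (φ nn)
        + (p : W)^t • ((p : W)^t • c (A x)) := by
      rw [hψ'app, hsymm]
      have h1 : (h' (φ₁ x) : M) = G (h₀ (φ₁ x)) := by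
        rw [hh', LinearEquiv.trans_apply, he₀app, heGapp]
      rw [h1]
      have h2 : h₀ (φ₁ x) = φ nn + (p : W)^t • A x := by
        rw [← hh₀x, add_comm]
        exact sub_eq_iff_eq_add.mp (hAs x).symm
      rw [h2, hGapp, map_add, map_smul, smul_add]
      abel
    have hφm : φ m = φ nn + (p : W)^t • φ (c nn) := by
      rw [hm, map_add, phi_psmul hφ.1]
    refine ⟨A x + c (φ nn) + ((p : W)^t • c (A x) - φ (c nn)), ?_, ?_⟩
    · rw [hψ'm, hφm]
      simp only [smul_add, smul_sub]
      abel
    · have h1 : A x = A₀ nn := by rw [hA₀, hx]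
      obtain ⟨z₁, hz₁⟩ := hc nn
      refine ⟨z₁ + (p : W)^(t-1) • ϑ (c (A x)) - c nn, ?_⟩
      have h2 : A x + c (φ nn) + ((p : W)^t • c (A x) - φ (c nn))
          = (A₀ nn + c (φ nn)) + ((p : W)^t • c (A x) + (-(φ (c nn)))) := by
        rw [h1]
        abel
      rw [h2, ϑ.map_add (A₀ nn + c (φ nn)) _, hz₁, ϑ.map_add, theta_psmul hφ.1 hϑ, map_neg,
        (hϑ (c nn)).2]
      rw [smul_sub, smul_add, smul_smul, ← pow_succ']
      have h6 : t - 1 + 1 = t := by omega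
      rw [h6]
      abel
  -- Step 6 : the gauge transformation g with φ∘g = ψ'
  have hwex : ∀ m : M, ∃ wm : M, (p : W)^(t+1) • wm = ϑ (ψ' m - φ m) ∧
      (p : W)^t • φ wm = ψ' m - φ m := by
    intro m
    obtain ⟨E, hE, wv, hwv⟩ := hkey m
    refine ⟨wv, ?_, ?_⟩
    · rw [hE, theta_psmul hφ.1 hϑ, hwv, smul_smul, ← pow_succ]
    · have h1 : φ (ϑ E) = (p : W) • E := (hϑ E).1
      rw [hwv] at h1
      have h2 : φ ((p : W) • wv) = (p : W) • φ wv := by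
        have := phi_psmul hφ.1 1 wv
        simpa using this
      rw [h2] at h1
      have h3 : φ wv = E := psmul_cancel (p := p) (k := k) (n := 1) (by simpa using h1)
      rw [h3, ← hE]
  set w : M → M := fun m => (hwex m).choose with hwdef
  have hw1 : ∀ m : M, (p : W)^(t+1) • w m = ϑ (ψ' m - φ m) := fun m => (hwex m).choose_spec.1
  have hw2 : ∀ m : M, (p : W)^t • φ (w m) = ψ' m - φ m := fun m => (hwex m).choose_spec.2
  clear hwdef
  clear_value w
  have hwadd : ∀ m m' : M, w (m + m') = w m + w m' := by
    intro m m'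
    refine psmul_cancel (p := p) (k := k) (n := t+1) ?_
    rw [hw1, smul_add, hw1, hw1, ← ϑ.map_add]
    congr 1
    rw [hψ'add, map_add]
    abel
  have hwsl : ∀ (a : W) (m : M), w (a • m) = a • w m := by
    intro a m
    refine psmul_cancel (p := p) (k := k) (n := t+1) ?_
    rw [hw1, smul_comm, hw1]
    rw [hψ'sl, hφ.1, ← smul_sub, theta_semilinear hφ.1 hϑ]
    have h1 : (WittVector.frobeniusEquiv p k).symm (WittVector.frobenius a) = a :=
      (WittVector.frobeniusEquiv p k).symm_apply_apply a
    rw [h1]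
  set g : M →ₗ[W] M :=
    { toFun := fun m => m + (p : W)^t • w m
      map_add' := by
        intro m m'
        show (m + m') + (p : W)^t • w (m + m') = (m + (p : W)^t • w m) + (m' + (p : W)^t • w m')
        rw [hwadd, smul_add]
        abel
      map_smul' := by
        intro a m
        show a • m + (p : W)^t • w (a • m) = (RingHom.id W a) • (m + (p : W)^t • w m)
        rw [RingHom.id_apply, hwsl, smul_add, smul_comm] } with hgdef
  have hgapp : ∀ m : M, g m = m + (p : W)^t • w m := fun m => rfl
  have hφg : ∀ m : M, φ (g m) = ψ' m := by
    intro m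
    rw [hgapp, map_add, phi_psmul hφ.1, hw2]
    abel
  have hψ'inj : Function.Injective ψ' := by
    intro a b hab
    rw [hψ'app, hψ'app] at hab
    have h1 := h'.injective hab
    have h2 := phi_inj (p := p) (k := k) hϑ₁ h1
    calc a = h' (h'.symm a) := (h'.apply_symm_apply a).symm
    _ = h' (h'.symm b) := by rw [h2]
    _ = b := h'.apply_symm_apply b
  have hgbij : Function.Bijective g := by
    constructor
    · intro a b hab
      refine hψ'inj ?_
      rw [← hφg, ← hφg, hab]
    · refine surj_of (p := p) (k := k) ht g (fun m => ?_)
      refine ⟨m, -(w m), ?_⟩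
      rw [hgapp, smul_neg]
      abel
  set eg : M ≃ₗ[W] M := LinearEquiv.ofBijective g hgbij with hegdef
  have hegapp : ∀ m : M, eg m = g m := fun m => rfl
  obtain ⟨u, hu⟩ := hg eg (fun x => ⟨w x, by rw [hegapp, hgapp]; abel⟩)
  refine ⟨h'.trans (eg.trans u), fun x => ?_⟩
  have k1 : h' (φ₁ x) = ψ' (h' x) := by rw [hψ'app, h'.symm_apply_apply]
  have k2 : ψ' (h' x) = φ (g (h' x)) := (hφg (h' x)).symm
  calc (h'.trans (eg.trans u)) (φ₁ x) = u (eg (h' (φ₁ x))) := rfl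
  _ = u (eg (φ (g (h' x)))) := by rw [k1, k2]
  _ = φ (u (g (h' x))) := hu (g (h' x))
  _ = φ (u (eg (h' x))) := by rw [hegapp]
  _ = φ ((h'.trans (eg.trans u)) x) := rfl

end GD


variable (p : ℕ) [Fact p.Prime] (k : Type) [Field k] [IsAlgClosed k] [CharP k p]


/-- **Theorem 2.2 (a), in the general form of its proof.** For a Dieudonné module `(M, φ)`
over `k` and `t ≥ 1`, the following are equivalent: (i) for every `W(k)`-linear automorphism
`g` of `M` congruent to `id_M` mod `p^t`, the Dieudonné modules `(M, g∘φ)` and `(M, φ)` are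
isomorphic; (ii) `(M, φ)` is determined up to isomorphism by its level-`t` truncation.
In particular the smallest `t` as in (i) equals the smallest `n` as in (ii). -/
theorem gauge_iff_determined
    (M : Type) [AddCommGroup M] [Module (WittVector p k) M]
    [Module.Free (WittVector p k) M] [Module.Finite (WittVector p k) M]
    (φ ϑ : M →+ M) (hφ : IsDieudonne p k M φ) (hϑ : IsVerschiebung p k M φ ϑ)
    (t : ℕ) (ht : 1 ≤ t) :
    ((∀ g : M ≃ₗ[WittVector p k] M, (∀ x : M, ∃ y : M, g x - x = ((p : WittVector p k)^t) • y) →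
        ∃ h : M ≃ₗ[WittVector p k] M, ∀ x : M, h (g (φ x)) = φ (h x)) ↔
      DeterminedAt p k M φ ϑ t) ∧
    (∀ t₀ : ℕ,
      IsLeast {s : ℕ | 1 ≤ s ∧ ∀ g : M ≃ₗ[WittVector p k] M,
          (∀ x : M, ∃ y : M, g x - x = ((p : WittVector p k)^s) • y) →
          ∃ h : M ≃ₗ[WittVector p k] M, ∀ x : M, h (g (φ x)) = φ (h x)} t₀ ↔
      IsLeast {s : ℕ | 1 ≤ s ∧ DeterminedAt p k M φ ϑ s} t₀) := by
  have main : ∀ s : ℕ, 1 ≤ s →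
      ((∀ g : M ≃ₗ[WittVector p k] M,
          (∀ x : M, ∃ y : M, g x - x = ((p : WittVector p k)^s) • y) →
          ∃ h : M ≃ₗ[WittVector p k] M, ∀ x : M, h (g (φ x)) = φ (h x)) ↔
        DeterminedAt p k M φ ϑ s) := by
    intro s hs
    constructor
    · exact fun h => GD.gauge_implies_determined hφ hϑ hs h
    · exact fun h => GD.determined_implies_gauge hφ hϑ hs h
  constructor
  · exact main t ht
  · intro t₀
    have hset : {s : ℕ | 1 ≤ s ∧ ∀ g : M ≃ₗ[WittVector p k] M,
        (∀ x : M, ∃ y : M, g x - x = ((p : WittVector p k)^s) • y) →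
        ∃ h : M ≃ₗ[WittVector p k] M, ∀ x : M, h (g (φ x)) = φ (h x)} =
        {s : ℕ | 1 ≤ s ∧ DeterminedAt p k M φ ϑ s} := by
      ext s
      simp only [Set.mem_setOf_eq]
      exact and_congr_right (fun hs => main s hs)
    rw [hset]
end

section
/- Let d ≥ 2 and let (M, φ) = C_d and φ₁ be as defined. Then: (a) (M, φ₁) is a supersingular Dieudonné module over k; (b) (φ₁ − φ)(M) ⊆ p^{d−1}·M and (ϑ₁ − ϑ)(M) ⊆ p^{d−1}·M, where ϑ = p·φ⁻¹ and ϑ₁ = p·φ₁⁻¹, so the level-(d−1) truncations of (M, φ) and (M, φ₁) coincide; and (c) (M, φ₁) is NOT isomorphic to (M, φ). Consequently, a supersingular Dieudonné module of rank 2d is in general not determined up to isomorphism by its level-(d−1) truncation, so the bound d in the truncation theorem is optimal. -/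
open WittVector

section Defs

variable (p : ℕ) [Fact p.Prime] (k : Type) [CommRing k] [CharP k p]

/-- `(M, φ)` is supersingular: all slopes of its Newton polygon are `1/2`; concretely, there
exists `c` such that `p^(n+c)·M ⊆ φ^(2n)(M)` and `p^c·φ^(2n)(M) ⊆ p^n·M` for all `n`. -/
def IsSupersingular (M : Type) [AddCommGroup M] [Module (WittVector p k) M]
    (φ : M →+ M) : Prop :=
  ∃ c : ℕ, ∀ n : ℕ,
    (∀ m : M, ∃ m' : M, (⇑φ)^[2*n] m' = ((p : WittVector p k)^(n+c)) • m) ∧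
    (∀ m : M, ∃ m'' : M,
      ((p : WittVector p k)^c) • (⇑φ)^[2*n] m = ((p : WittVector p k)^n) • m'')

/-- The Dieudonné module `C_d`: free with basis `e₀, …, e_{2d-1}` indexed by `ZMod (2d)`,
with `φ(e_i) = e_{i+1}` for `0 ≤ i ≤ d-1` and `φ(e_i) = p·e_{i+1}` for `d ≤ i ≤ 2d-1`
(indices cyclic). -/
noncomputable def CdPhi (d : ℕ) :
    (ZMod (2 * d) → WittVector p k) →+ (ZMod (2 * d) → WittVector p k) where
  toFun f j := (if (j - 1 : ZMod (2 * d)).val < d then 1 else (p : WittVector p k)) *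
      WittVector.frobenius (f (j - 1))
  map_zero' := by ext j; simp
  map_add' f g := by ext j; simp [mul_add]

/-- The modification `φ₁` of `C_d`: `φ₁(e_i) = φ(e_i)` for `i ≠ d` and
`φ₁(e_d) = p·e_{d+1} + p^{d-1}·e₁`. -/
noncomputable def CdPhi1 (d : ℕ) :
    (ZMod (2 * d) → WittVector p k) →+ (ZMod (2 * d) → WittVector p k) where
  toFun f j := CdPhi p k d f j +
      (if j = 1 then (p : WittVector p k)^(d - 1) * WittVector.frobenius (f (d : ZMod (2 * d)))
        else 0)
  map_zero' := by funext j; simp [CdPhi]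
  map_add' f g := by
    funext j
    have := congrFun (map_add (CdPhi p k d) f g) j
    simp only [Pi.add_apply, map_add, this, mul_add]
    split_ifs <;> ring

end Defs



set_option linter.unusedSectionVars false

section CdAux
variable (p : ℕ) [Fact p.Prime] (k : Type) [Field k] [IsAlgClosed k] [CharP k p]

local notation "𝕎" => WittVector p k

/-- inverse Frobenius as ring hom -/
noncomputable def sinv : 𝕎 →+* 𝕎 := ((frobeniusEquiv p k).symm : WittVector p k ≃+* WittVector p k)

lemma frob_sinv (x : 𝕎) : frobenius (sinv p k x) = x := by
  have := (frobeniusEquiv p k).apply_symm_apply x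
  simpa [sinv, WittVector.frobeniusEquiv_apply] using this

lemma sinv_frob (x : 𝕎) : sinv p k (frobenius x) = x := by
  have := (frobeniusEquiv p k).symm_apply_apply x
  simpa [sinv, WittVector.frobeniusEquiv_apply] using this

lemma sinv_natCast (n : ℕ) : sinv p k (n : 𝕎) = n := map_natCast _ n

open Classical in
noncomputable def pdivW (x : 𝕎) : 𝕎 := if h : (p:𝕎) ∣ x then h.choose else 0

lemma pdivW_spec {x : 𝕎} (h : (p:𝕎) ∣ x) : (p:𝕎) * pdivW p k x = x := by
  rw [pdivW, dif_pos h]; exact h.choose_spec.symm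

lemma p_neZero : (p : 𝕎) ≠ 0 := WittVector.p_nonzero p k

lemma pdivW_dvd {x : 𝕎} (e : ℕ) (h : (p:𝕎)^(e+1) ∣ x) : (p:𝕎)^e ∣ pdivW p k x := by
  have h1 : (p:𝕎) ∣ x := dvd_trans (dvd_pow_self _ (Nat.succ_ne_zero e)) (by
    simpa [pow_succ] using h)
  obtain ⟨c, hc⟩ := h
  have h2 : (p:𝕎) * pdivW p k x = (p:𝕎) * ((p:𝕎)^e * c) := by
    rw [pdivW_spec p k h1, hc]; ring
  exact ⟨c, mul_left_cancel₀ (p_neZero p k) h2⟩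

lemma pdivW_p_mul (x : 𝕎) : pdivW p k ((p:𝕎) * x) = x :=
  mul_left_cancel₀ (p_neZero p k) (pdivW_spec p k ⟨x, rfl⟩)

end CdAux
section V
variable (d : ℕ) [NeZero (2*d)]

lemma val_succ_cases (hd : 2 ≤ d) (i : ZMod (2*d)) :
    ((i+1).val = i.val + 1 ∧ i.val + 1 < 2*d) ∨ (i.val = 2*d - 1 ∧ (i+1).val = 0) := by
  haveI : Fact (1 < 2*d) := ⟨by omega⟩
  have hlt := ZMod.val_lt i
  rw [ZMod.val_add, ZMod.val_one]
  by_cases h : i.val + 1 < 2*d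
  · left; exact ⟨Nat.mod_eq_of_lt h, h⟩
  · right
    have h1 : i.val = 2*d - 1 := by omega
    refine ⟨h1, ?_⟩
    rw [h1]
    have h2 : 2*d - 1 + 1 = 2*d := by omega
    rw [h2, Nat.mod_self]

lemma val_pred_cases (hd : 2 ≤ d) (i : ZMod (2*d)) :
    ((i-1).val = i.val - 1 ∧ 1 ≤ i.val) ∨ (i.val = 0 ∧ (i-1).val = 2*d - 1) := by
  have hlt := ZMod.val_lt i
  have hm1 : ((2*d-1 : ℕ) : ZMod (2*d)) = -1 := by
    rw [Nat.cast_sub (by omega : (1:ℕ) ≤ 2*d), ZMod.natCast_self]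
    push_cast
    ring
  have hie : i - 1 = i + ((2*d-1 : ℕ) : ZMod (2*d)) := by rw [hm1]; ring
  have hv : (i - 1).val = (i.val + (2*d-1)) % (2*d) := by
    rw [hie, ZMod.val_add, ZMod.val_cast_of_lt (by omega : 2*d-1 < 2*d)]
  by_cases h : i.val = 0
  · right
    refine ⟨h, ?_⟩
    rw [hv, h]
    simpa using Nat.mod_eq_of_lt (by omega : 0 + (2*d-1) < 2*d)
  · left
    refine ⟨?_, by omega⟩
    rw [hv]
    have h2 : i.val + (2*d-1) = (i.val - 1) + 1*(2*d) := by omega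
    rw [h2, Nat.add_mul_mod_self_right, Nat.mod_eq_of_lt (by omega)]

lemma val_d (hd : 2 ≤ d) : ((d : ℕ) : ZMod (2*d)).val = d := ZMod.val_cast_of_lt (by omega)

end V

section C3
variable (p : ℕ) [Fact p.Prime] (k : Type) [Field k] [IsAlgClosed k] [CharP k p] (d : ℕ)

local notation "𝕎" => WittVector p k
local notation "MM" => (ZMod (2*d) → WittVector p k)

lemma CdPhi_apply (f : MM) (j : ZMod (2*d)) :
    CdPhi p k d f j
      = (if ((j - 1):ZMod (2*d)).val < d then 1 else (p:𝕎)) * frobenius (f (j-1)) := rfl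

lemma CdPhi1_apply (f : MM) (j : ZMod (2*d)) :
    CdPhi1 p k d f j = CdPhi p k d f j +
      (if j = 1 then (p:𝕎)^(d-1) * frobenius (f ((d:ℕ):ZMod (2*d))) else 0) := rfl

lemma CdPhi_semilinear : IsFrobSemilinear p k MM (CdPhi p k d) := by
  intro a f
  funext j
  simp only [CdPhi_apply, Pi.smul_apply, smul_eq_mul, map_mul]
  ring

lemma CdPhi1_semilinear : IsFrobSemilinear p k MM (CdPhi1 p k d) := by
  intro a f
  funext j
  have h := congrFun (CdPhi_semilinear p k d a f) j
  simp only [CdPhi1_apply, Pi.smul_apply, smul_eq_mul, map_mul, h]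
  split_ifs <;> ring

lemma frob_pow_p (s : ℕ) : frobenius ((p:𝕎)^s) = (p:𝕎)^s := by
  rw [map_pow, map_natCast]

lemma sinv_pow_p (s : ℕ) : sinv p k ((p:𝕎)^s) = (p:𝕎)^s := by
  rw [map_pow, map_natCast]

lemma CdPhi_psmul (s : ℕ) (f : MM) :
    CdPhi p k d ((p:𝕎)^s • f) = (p:𝕎)^s • CdPhi p k d f := by
  rw [CdPhi_semilinear p k d ((p:𝕎)^s) f, frob_pow_p]

lemma CdPhi1_psmul (s : ℕ) (f : MM) :
    CdPhi1 p k d ((p:𝕎)^s • f) = (p:𝕎)^s • CdPhi1 p k d f := by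
  rw [CdPhi1_semilinear p k d ((p:𝕎)^s) f, frob_pow_p]

lemma CdPhi1_iter_psmul (n s : ℕ) (f : MM) :
    (⇑(CdPhi1 p k d))^[n] ((p:𝕎)^s • f) = (p:𝕎)^s • (⇑(CdPhi1 p k d))^[n] f := by
  induction n generalizing f with
  | zero => simp
  | succ n ih =>
    rw [Function.iterate_succ_apply, Function.iterate_succ_apply, CdPhi1_psmul, ih]

/-- `τ f = f + p^(d-1)·f(d)·e₀` -/
noncomputable def tauM (f : MM) : MM :=
  fun i => f i + if i = 0 then (p:𝕎)^(d-1) * f ((d:ℕ):ZMod (2*d)) else 0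

lemma d_ne_zero (hd : 2 ≤ d) : ((d:ℕ):ZMod (2*d)) ≠ 0 := by
  haveI : NeZero (2*d) := ⟨by omega⟩
  intro h
  have := val_d d hd
  rw [h, ZMod.val_zero] at this
  omega

lemma CdPhi1_eq_phi_tau (hd : 2 ≤ d) (f : MM) :
    CdPhi1 p k d f = CdPhi p k d (tauM p k d f) := by
  haveI : NeZero (2*d) := ⟨by omega⟩
  funext j
  rw [CdPhi1_apply, CdPhi_apply, CdPhi_apply]
  have hsub : j - 1 = 0 ↔ j = 1 := sub_eq_zero
  by_cases hj : j = 1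
  · have h0 : j - 1 = 0 := hsub.mpr hj
    rw [if_pos hj, h0]
    have hval0 : (0 : ZMod (2*d)).val < d := by rw [ZMod.val_zero]; omega
    rw [if_pos hval0]
    simp only [tauM, eq_self_iff_true, if_true, map_add, map_mul, frob_pow_p]
    ring
  · have h0 : ¬ (j - 1 = 0) := fun h => hj (hsub.mp h)
    rw [if_neg hj]
    simp only [tauM, if_neg h0, add_zero]

/-- pointwise inverse ingredient: `(φ⁻¹ g) i` -/
noncomputable def baseM (g : MM) : MM :=
  fun i => sinv p k (if i.val < d then g (i+1) else pdivW p k (g (i+1)))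

noncomputable def inv1 (g : MM) : MM :=
  fun i => baseM p k d g i - if i = 0 then (p:𝕎)^(d-1) * baseM p k d g ((d:ℕ):ZMod (2*d)) else 0

lemma phi_baseM (g : MM)
    (hg : ∀ j : ZMod (2*d), ¬ ((j-1 : ZMod (2*d)).val < d) → (p:𝕎) ∣ g j) :
    CdPhi p k d (baseM p k d g) = g := by
  funext j
  rw [CdPhi_apply]
  have hij : (j - 1) + 1 = j := sub_add_cancel j 1
  by_cases h : (j-1 : ZMod (2*d)).val < d
  · rw [if_pos h]
    simp only [baseM, if_pos h, frob_sinv, hij, one_mul]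
  · rw [if_neg h]
    simp only [baseM, if_neg h, frob_sinv, hij]
    exact pdivW_spec p k (hg j h)

lemma tau_inv1 (hd : 2 ≤ d) (g : MM) : tauM p k d (inv1 p k d g) = baseM p k d g := by
  funext i
  simp only [tauM, inv1]
  by_cases hi : i = 0
  · rw [if_pos hi, if_pos hi, if_neg (d_ne_zero d hd)]
    ring
  · rw [if_neg hi, if_neg hi]
    ring

lemma phi1_inv1 (hd : 2 ≤ d) (g : MM)
    (hg : ∀ j : ZMod (2*d), ¬ ((j-1 : ZMod (2*d)).val < d) → (p:𝕎) ∣ g j) :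
    CdPhi1 p k d (inv1 p k d g) = g := by
  rw [CdPhi1_eq_phi_tau p k d hd, tau_inv1 p k d hd, phi_baseM p k d g hg]

lemma sinv_dvd {x : 𝕎} (a : ℕ) (h : (p:𝕎)^a ∣ x) : (p:𝕎)^a ∣ sinv p k x := by
  have := map_dvd (sinv p k) h
  rwa [sinv_pow_p] at this

lemma baseM_dvd (hd : 2 ≤ d) (e ε : ZMod (2*d) → ℕ) (g : MM)
    (hdvd : ∀ j, (p:𝕎)^(e j) ∣ g j)
    (hε : ∀ i : ZMod (2*d), ¬ i.val < d → ε i + 1 ≤ e (i+1))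
    (hε' : ∀ i : ZMod (2*d), i.val < d → ε i ≤ e (i+1)) :
    ∀ i, (p:𝕎)^(ε i) ∣ baseM p k d g i := by
  intro i
  by_cases h : i.val < d
  · simp only [baseM, if_pos h]
    exact sinv_dvd p k _ (dvd_trans (pow_dvd_pow _ (hε' i h)) (hdvd (i+1)))
  · simp only [baseM, if_neg h]
    refine sinv_dvd p k _ (pdivW_dvd p k (ε i) ?_)
    exact dvd_trans (pow_dvd_pow _ (hε i h)) (hdvd (i+1))

lemma inv1_dvd (hd : 2 ≤ d) (e ε : ZMod (2*d) → ℕ) (g : MM)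
    (hdvd : ∀ j, (p:𝕎)^(e j) ∣ g j)
    (hε : ∀ i : ZMod (2*d), ¬ i.val < d → ε i + 1 ≤ e (i+1))
    (hε' : ∀ i : ZMod (2*d), i.val < d → ε i ≤ e (i+1))
    (hε0 : ε 0 ≤ (d-1) + ε ((d:ℕ):ZMod (2*d))) :
    ∀ i, (p:𝕎)^(ε i) ∣ inv1 p k d g i := by
  intro i
  have hb := baseM_dvd p k d hd e ε g hdvd hε hε'
  by_cases hi : i = 0
  · simp only [inv1, if_pos hi]
    refine dvd_sub (hi ▸ hb 0) ?_
    have : (p:𝕎)^(ε i) ∣ (p:𝕎)^(d-1) * (p:𝕎)^(ε ((d:ℕ):ZMod (2*d))) := by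
      rw [← pow_add]; exact pow_dvd_pow _ (hi ▸ hε0)
    exact dvd_trans this (mul_dvd_mul_left _ (hb _))
  · simp only [inv1, if_neg hi, sub_zero]
    exact hb i

end C3

section C4
variable (d : ℕ)

/-- lattice exponents -/
def Av (v : ℕ) : ℕ := if v ≤ d then (d - v + 1)/2 else (v - d + 1)/2

def alphaZ (i : ZMod (2*d)) : ℕ := Av d i.val

def betaZ (i : ZMod (2*d)) : ℕ :=
  alphaZ d (i-1) + (if (i-1 : ZMod (2*d)).val < d then 0 else 1)

lemma betaZ_succ (i : ZMod (2*d)) :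
    betaZ d (i+1) = alphaZ d i + (if i.val < d then 0 else 1) := by
  simp [betaZ, add_sub_cancel_right]

section NZ
variable [NeZero (2*d)]

lemma alpha_succ (hd : 2 ≤ d) (i : ZMod (2*d)) :
    alphaZ d (i+1) + 1 = betaZ d i + (if i.val < d then 0 else 1) := by
  have hv := ZMod.val_lt i
  rcases val_succ_cases d hd i with ⟨h1, h1'⟩ | ⟨h1, h1'⟩ <;>
    rcases val_pred_cases d hd i with ⟨h2, h2'⟩ | ⟨h2, h2'⟩ <;>
    simp only [alphaZ, betaZ, Av, h1, h2, h1', h2'] <;>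
    split_ifs <;> omega

lemma alpha_tau (hd : 2 ≤ d) : alphaZ d 0 ≤ (d-1) + alphaZ d ((d:ℕ):ZMod (2*d)) := by
  simp only [alphaZ, Av, ZMod.val_zero, val_d d hd]
  split_ifs <;> omega

lemma beta_tau (hd : 2 ≤ d) : betaZ d 0 ≤ (d-1) + betaZ d ((d:ℕ):ZMod (2*d)) := by
  have h0 : ((0:ZMod (2*d))-1).val = 2*d-1 := by
    rcases val_pred_cases d hd 0 with ⟨h2, h2'⟩ | ⟨h2, h2'⟩
    · rw [ZMod.val_zero] at h2'; omega
    · exact h2'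
  have hd1 : (((d:ℕ):ZMod (2*d))-1).val = d-1 := by
    rcases val_pred_cases d hd ((d:ℕ):ZMod (2*d)) with ⟨h2, h2'⟩ | ⟨h2, h2'⟩
    · rw [val_d d hd] at h2; exact h2
    · rw [val_d d hd] at h2; omega
  simp only [betaZ, alphaZ, Av, h0, hd1]
  split_ifs <;> omega

lemma alpha_le (hd : 2 ≤ d) (i : ZMod (2*d)) : alphaZ d i ≤ d := by
  have hv := ZMod.val_lt i
  simp only [alphaZ, Av]
  split_ifs <;> omega

lemma beta_le (hd : 2 ≤ d) (i : ZMod (2*d)) : betaZ d i ≤ d := by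
  have hv := ZMod.val_lt (i - 1)
  simp only [betaZ, alphaZ, Av]
  split_ifs <;> omega

end NZ
end C4

section C5
variable (p : ℕ) [Fact p.Prime] (k : Type) [Field k] [IsAlgClosed k] [CharP k p] (d : ℕ)

local notation "𝕎" => WittVector p k
local notation "MM" => (ZMod (2*d) → WittVector p k)

lemma frob_dvd {x : 𝕎} (a : ℕ) (h : (p:𝕎)^a ∣ x) : (p:𝕎)^a ∣ frobenius x := by
  have := map_dvd (frobenius : 𝕎 →+* 𝕎) h
  rwa [frob_pow_p] at this

section NZ2
variable [NeZero (2*d)]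

lemma up1 (hd : 2 ≤ d) (n : ℕ) (f : MM) (hf : ∀ j, (p:𝕎)^(n + alphaZ d j) ∣ f j) :
    ∀ j, (p:𝕎)^(n + betaZ d j) ∣ CdPhi1 p k d f j := by
  intro j
  rw [CdPhi1_apply]
  refine dvd_add ?_ ?_
  · rw [CdPhi_apply]
    by_cases h : (j-1 : ZMod (2*d)).val < d
    · rw [if_pos h, one_mul]
      have hb : betaZ d j = alphaZ d (j-1) := by simp [betaZ, if_pos h]
      rw [hb]
      exact frob_dvd p k _ (hf _)
    · rw [if_neg h]
      have hb : betaZ d j = alphaZ d (j-1) + 1 := by simp [betaZ, if_neg h]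
      rw [hb]
      have h2 : (p:𝕎)^(n + alphaZ d (j-1)) ∣ frobenius (f (j-1)) := frob_dvd p k _ (hf _)
      have h3 : (p:𝕎)^(n + (alphaZ d (j-1) + 1)) = (p:𝕎) * (p:𝕎)^(n + alphaZ d (j-1)) := by
        rw [← pow_succ']; ring_nf
      rw [h3]
      exact mul_dvd_mul_left _ h2
  · by_cases hj : j = 1
    · rw [if_pos hj]
      have hb : betaZ d (1 : ZMod (2*d)) = alphaZ d 0 := by
        have h0 : (1:ZMod (2*d)) - 1 = 0 := by ring
        have hv : ((1:ZMod (2*d)) - 1).val < d := by rw [h0, ZMod.val_zero]; omega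
        simp [betaZ, h0, if_pos hv] <;> omega
      have hle : n + betaZ d j ≤ (d-1) + (n + alphaZ d ((d:ℕ):ZMod (2*d))) := by
        rw [hj, hb]
        have := alpha_tau d hd
        omega
      have h2 : (p:𝕎)^(n + alphaZ d ((d:ℕ):ZMod (2*d))) ∣ frobenius (f ((d:ℕ):ZMod (2*d))) :=
        frob_dvd p k _ (hf _)
      calc (p:𝕎)^(n + betaZ d j) ∣ (p:𝕎)^((d-1) + (n + alphaZ d ((d:ℕ):ZMod (2*d)))) :=
            pow_dvd_pow _ hle
        _ = (p:𝕎)^(d-1) * (p:𝕎)^(n + alphaZ d ((d:ℕ):ZMod (2*d))) := by rw [pow_add]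
        _ ∣ (p:𝕎)^(d-1) * frobenius (f ((d:ℕ):ZMod (2*d))) := mul_dvd_mul_left _ h2
    · rw [if_neg hj]
      exact dvd_zero _

lemma up2 (hd : 2 ≤ d) (n : ℕ) (f : MM) (hf : ∀ j, (p:𝕎)^(n + betaZ d j) ∣ f j) :
    ∀ j, (p:𝕎)^(n + 1 + alphaZ d j) ∣ CdPhi1 p k d f j := by
  intro j
  rw [CdPhi1_apply]
  have hj1 : (j - 1) + 1 = j := sub_add_cancel j 1
  have hR2 := alpha_succ d hd (j-1)
  rw [hj1] at hR2
  refine dvd_add ?_ ?_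
  · rw [CdPhi_apply]
    by_cases h : (j-1 : ZMod (2*d)).val < d
    · rw [if_pos h] at hR2
      rw [if_pos h, one_mul]
      have hle : n + 1 + alphaZ d j ≤ n + betaZ d (j-1) := by omega
      exact dvd_trans (pow_dvd_pow _ hle) (frob_dvd p k _ (hf _))
    · rw [if_neg h] at hR2
      rw [if_neg h]
      -- hR2 : alphaZ j + 1 = betaZ (j-1) + 1
      have h2 : (p:𝕎)^(n + betaZ d (j-1)) ∣ frobenius (f (j-1)) := frob_dvd p k _ (hf _)
      have h3 : (p:𝕎)^(n + 1 + alphaZ d j) = (p:𝕎) * (p:𝕎)^(n + betaZ d (j-1)) := by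
        rw [← pow_succ']
        congr 1
        omega
      rw [h3]
      exact mul_dvd_mul_left _ h2
  · by_cases hj : j = 1
    · rw [if_pos hj]
      have hR20 := alpha_succ d hd 0
      rw [zero_add] at hR20
      have hz0 : (0 : ZMod (2*d)).val < d := by rw [ZMod.val_zero]; omega
      rw [if_pos hz0, add_zero] at hR20
      -- hR20 : alphaZ 1 + 1 = betaZ 0
      have hbt := beta_tau d hd
      have hle : n + 1 + alphaZ d j ≤ (d-1) + (n + betaZ d ((d:ℕ):ZMod (2*d))) := by
        rw [hj]; omega
      have h2 : (p:𝕎)^(n + betaZ d ((d:ℕ):ZMod (2*d))) ∣ frobenius (f ((d:ℕ):ZMod (2*d))) :=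
        frob_dvd p k _ (hf _)
      calc (p:𝕎)^(n + 1 + alphaZ d j) ∣ (p:𝕎)^((d-1) + (n + betaZ d ((d:ℕ):ZMod (2*d)))) :=
            pow_dvd_pow _ hle
        _ = (p:𝕎)^(d-1) * (p:𝕎)^(n + betaZ d ((d:ℕ):ZMod (2*d))) := by rw [pow_add]
        _ ∣ (p:𝕎)^(d-1) * frobenius (f ((d:ℕ):ZMod (2*d))) := mul_dvd_mul_left _ h2
    · rw [if_neg hj]
      exact dvd_zero _

lemma upIter (hd : 2 ≤ d) (n : ℕ) (f : MM) (hf : ∀ j, (p:𝕎)^(alphaZ d j) ∣ f j) :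
    ∀ j, (p:𝕎)^(n + alphaZ d j) ∣ (⇑(CdPhi1 p k d))^[2*n] f j := by
  induction n with
  | zero => simpa using hf
  | succ n ih =>
    have h1 := up1 p k d hd n _ ih
    have h2 := up2 p k d hd n _ h1
    have he : 2*(n+1) = (2*n + 1) + 1 := by ring
    rw [he, Function.iterate_succ_apply', Function.iterate_succ_apply']
    intro j
    have := h2 j
    have hee : n + 1 + alphaZ d j = n + 1 + alphaZ d j := rfl
    simpa [add_assoc, add_comm, add_left_comm] using this

lemma down1 (hd : 2 ≤ d) (n : ℕ) (g : MM) (hg : ∀ j, (p:𝕎)^(n + betaZ d j) ∣ g j) :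
    ∃ f : MM, (∀ j, (p:𝕎)^(n + alphaZ d j) ∣ f j) ∧ CdPhi1 p k d f = g := by
  refine ⟨inv1 p k d g, ?_, ?_⟩
  · refine inv1_dvd p k d hd (fun j => n + betaZ d j) (fun i => n + alphaZ d i) g hg ?_ ?_ ?_
    · intro i hi
      show n + alphaZ d i + 1 ≤ n + betaZ d (i+1)
      rw [betaZ_succ, if_neg hi]
      omega
    · intro i hi
      show n + alphaZ d i ≤ n + betaZ d (i+1)
      rw [betaZ_succ, if_pos hi]
      omega
    · show n + alphaZ d 0 ≤ (d-1) + (n + alphaZ d ((d:ℕ):ZMod (2*d)))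
      have := alpha_tau d hd; omega
  · refine phi1_inv1 p k d hd g ?_
    intro j hjz
    have hb : 1 ≤ betaZ d j := by rw [betaZ, if_neg hjz]; omega
    exact dvd_trans (dvd_trans (dvd_pow_self _ (by omega : (1:ℕ) ≠ 0))
      (pow_dvd_pow (p:𝕎) (by omega : 1 ≤ n + betaZ d j))) (hg j)

lemma down2 (hd : 2 ≤ d) (n : ℕ) (g : MM) (hg : ∀ j, (p:𝕎)^(n + 1 + alphaZ d j) ∣ g j) :
    ∃ f : MM, (∀ j, (p:𝕎)^(n + betaZ d j) ∣ f j) ∧ CdPhi1 p k d f = g := by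
  refine ⟨inv1 p k d g, ?_, ?_⟩
  · refine inv1_dvd p k d hd (fun j => n + 1 + alphaZ d j) (fun i => n + betaZ d i) g hg ?_ ?_ ?_
    · intro i hi
      show n + betaZ d i + 1 ≤ n + 1 + alphaZ d (i+1)
      have := alpha_succ d hd i
      rw [if_neg hi] at this
      omega
    · intro i hi
      show n + betaZ d i ≤ n + 1 + alphaZ d (i+1)
      have := alpha_succ d hd i
      rw [if_pos hi] at this
      omega
    · show n + betaZ d 0 ≤ (d-1) + (n + betaZ d ((d:ℕ):ZMod (2*d)))
      have := beta_tau d hd; omega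
  · refine phi1_inv1 p k d hd g ?_
    intro j hjz
    exact dvd_trans (dvd_trans (dvd_pow_self _ (by omega : (1:ℕ) ≠ 0))
      (pow_dvd_pow (p:𝕎) (by omega : 1 ≤ n + 1 + alphaZ d j))) (hg j)

lemma downIter (hd : 2 ≤ d) :
    ∀ (n : ℕ) (g : MM), (∀ j, (p:𝕎)^(n + alphaZ d j) ∣ g j) →
      ∃ f : MM, (⇑(CdPhi1 p k d))^[2*n] f = g := by
  intro n
  induction n with
  | zero => exact fun g _ => ⟨g, by simp⟩
  | succ n ih =>
    intro g hg
    obtain ⟨f1, hf1d, hf1⟩ := down2 p k d hd n g (by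
      intro j; have := hg j
      simpa [add_assoc, add_comm, add_left_comm] using this)
    obtain ⟨f2, hf2d, hf2⟩ := down1 p k d hd n f1 hf1d
    obtain ⟨f, hf⟩ := ih f2 hf2d
    refine ⟨f, ?_⟩
    have he : 2*(n+1) = (2*n + 1) + 1 := by ring
    rw [he, Function.iterate_succ_apply', Function.iterate_succ_apply', hf, hf2, hf1]

end NZ2

lemma dieudonne1 (hd : 2 ≤ d) : IsDieudonne p k MM (CdPhi1 p k d) := by
  refine ⟨CdPhi1_semilinear p k d, ?_⟩
  intro m
  refine ⟨inv1 p k d ((p:𝕎) • m), ?_⟩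
  refine phi1_inv1 p k d hd _ ?_
  intro j _
  have : ((p:𝕎) • m) j = (p:𝕎) * m j := rfl
  rw [this]
  exact dvd_mul_right _ _

lemma supersingular1 (hd : 2 ≤ d) : IsSupersingular p k MM (CdPhi1 p k d) := by
  haveI : NeZero (2*d) := ⟨by omega⟩
  refine ⟨d, fun n => ⟨?_, ?_⟩⟩
  · intro m
    refine downIter p k d hd n ((p:𝕎)^(n+d) • m) ?_
    intro j
    have h1 : ((p:𝕎)^(n+d) • m) j = (p:𝕎)^(n+d) * m j := rfl
    rw [h1]
    exact Dvd.dvd.mul_right (pow_dvd_pow _ (by have := alpha_le d hd j; omega)) _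
  · intro m
    have key := upIter p k d hd n ((p:𝕎)^d • m) (fun j => by
      have h1 : ((p:𝕎)^d • m) j = (p:𝕎)^d * m j := rfl
      rw [h1]
      exact Dvd.dvd.mul_right (pow_dvd_pow _ (alpha_le d hd j)) _)
    rw [CdPhi1_iter_psmul] at key
    have key2 : ∀ j, (p:𝕎)^n ∣ ((p:𝕎)^d • (⇑(CdPhi1 p k d))^[2*n] m) j := fun j =>
      dvd_trans (pow_dvd_pow _ (by omega : n ≤ n + alphaZ d j)) (key j)
    refine ⟨fun j => (key2 j).choose, ?_⟩
    funext j
    have h1 : ((p:𝕎)^n • fun j => (key2 j).choose) j = (p:𝕎)^n * (key2 j).choose := rfl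
    rw [h1, ← (key2 j).choose_spec]
end C5

section C6
variable (p : ℕ) [Fact p.Prime] (k : Type) [Field k] [IsAlgClosed k] [CharP k p] (d : ℕ)

local notation "𝕎" => WittVector p k
local notation "MM" => (ZMod (2*d) → WittVector p k)

noncomputable def theta0 (f : MM) : MM :=
  fun i => sinv p k ((if i.val < d then (p:𝕎) else 1) * f (i+1))

lemma phi_theta0 (f : MM) : CdPhi p k d (theta0 p k d f) = (p:𝕎) • f := by
  funext j
  rw [CdPhi_apply]
  have hij : (j - 1) + 1 = j := sub_add_cancel j 1
  have hs : ((p:𝕎) • f) j = (p:𝕎) * f j := rfl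
  by_cases h : (j-1 : ZMod (2*d)).val < d
  · rw [if_pos h, one_mul]
    simp only [theta0, if_pos h, frob_sinv, hij, hs]
  · rw [if_neg h]
    simp only [theta0, if_neg h, frob_sinv, hij, hs, one_mul]

lemma theta0_phi (f : MM) : theta0 p k d (CdPhi p k d f) = (p:𝕎) • f := by
  funext i
  have hii : (i + 1) - 1 = i := add_sub_cancel_right i 1
  have hs : ((p:𝕎) • f) i = (p:𝕎) * f i := rfl
  simp only [theta0, CdPhi_apply, hii, hs]
  by_cases h : i.val < d
  · rw [if_pos h, if_pos h, one_mul]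
    rw [show (p:𝕎) * frobenius (f i) = frobenius ((p:𝕎) * f i) by
      rw [map_mul, map_natCast], sinv_frob]
  · rw [if_neg h, if_neg h, one_mul]
    rw [show (p:𝕎) * frobenius (f i) = frobenius ((p:𝕎) * f i) by
      rw [map_mul, map_natCast], sinv_frob]

noncomputable def theta1 (f : MM) : MM := inv1 p k d ((p:𝕎) • f)

lemma phi1_theta1 (hd : 2 ≤ d) (f : MM) : CdPhi1 p k d (theta1 p k d f) = (p:𝕎) • f := by
  refine phi1_inv1 p k d hd _ ?_
  intro j _
  exact dvd_mul_right _ _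

lemma base_psmul (f : MM) (i : ZMod (2*d)) :
    baseM p k d ((p:𝕎) • f) i = theta0 p k d f i := by
  simp only [baseM, theta0]
  by_cases h : i.val < d
  · rw [if_pos h, if_pos h]
    rfl
  · rw [if_neg h, if_neg h, one_mul]
    congr 1
    exact pdivW_p_mul p k _

lemma theta1_sub_theta0 (hd : 2 ≤ d) (f : MM) (i : ZMod (2*d)) :
    theta1 p k d f i = theta0 p k d f i -
      (if i = 0 then (p:𝕎)^(d-1) * sinv p k (f (((d:ℕ):ZMod (2*d)) + 1)) else 0) := by
  have hdval : ¬ (((d:ℕ):ZMod (2*d)).val < d) := by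
    haveI : NeZero (2*d) := ⟨by omega⟩
    rw [val_d d hd]; omega
  simp only [theta1, inv1, base_psmul]
  congr 1
  by_cases hi : i = 0
  · rw [if_pos hi, if_pos hi]
    congr 1
    simp only [theta0, if_neg hdval, one_mul]
  · rw [if_neg hi, if_neg hi]

lemma CdPhi_cancel {f g : MM} (h : CdPhi p k d f = CdPhi p k d g) : f = g := by
  funext i
  have hc := congrFun h (i+1)
  have hii : (i + 1) - 1 = i := add_sub_cancel_right i 1
  rw [CdPhi_apply, CdPhi_apply, hii] at hc
  have hfrob : frobenius (f i) = frobenius (g i) := by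
    by_cases hv : i.val < d
    · rw [if_pos hv, one_mul, one_mul] at hc; exact hc
    · rw [if_neg hv] at hc
      exact mul_left_cancel₀ (p_neZero p k) hc
  exact (frobenius_bijective p k).injective hfrob

lemma tau_cancel (hd : 2 ≤ d) {f g : MM} (h : tauM p k d f = tauM p k d g) : f = g := by
  have hne := d_ne_zero d hd
  have hd' : f ((d:ℕ):ZMod (2*d)) = g ((d:ℕ):ZMod (2*d)) := by
    have := congrFun h ((d:ℕ):ZMod (2*d))
    simpa only [tauM, if_neg hne, add_zero] using this
  funext i
  have hc := congrFun h i
  by_cases hi : i = 0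
  · simp only [tauM, if_pos hi, hd'] at hc
    exact add_right_cancel hc
  · simpa only [tauM, if_neg hi, add_zero] using hc

lemma CdPhi1_cancel (hd : 2 ≤ d) {f g : MM} (h : CdPhi1 p k d f = CdPhi1 p k d g) : f = g := by
  rw [CdPhi1_eq_phi_tau p k d hd, CdPhi1_eq_phi_tau p k d hd] at h
  exact tau_cancel p k d hd (CdPhi_cancel p k d h)

lemma theta_unique (ϑ : MM →+ MM)
    (hϑ : IsVerschiebung p k MM (CdPhi p k d) ϑ) (f : MM) : ϑ f = theta0 p k d f := by
  refine CdPhi_cancel p k d ?_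
  rw [phi_theta0, (hϑ f).1]

lemma theta1_unique (hd : 2 ≤ d) (ϑ₁ : MM →+ MM)
    (hϑ : IsVerschiebung p k MM (CdPhi1 p k d) ϑ₁) (f : MM) : ϑ₁ f = theta1 p k d f := by
  refine CdPhi1_cancel p k d hd ?_
  rw [phi1_theta1 p k d hd, (hϑ f).1]

/-- part (b1) -/
lemma phi1_sub_phi (f : MM) :
    ∃ g : MM, CdPhi1 p k d f - CdPhi p k d f = ((p:𝕎)^(d-1)) • g := by
  refine ⟨fun j => if j = 1 then frobenius (f ((d:ℕ):ZMod (2*d))) else 0, ?_⟩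
  funext j
  have h1 : (CdPhi1 p k d f - CdPhi p k d f) j = CdPhi1 p k d f j - CdPhi p k d f j := rfl
  rw [h1, CdPhi1_apply]
  have h2 : (((p:𝕎)^(d-1)) • fun j => if j = 1 then frobenius (f ((d:ℕ):ZMod (2*d))) else 0) j
      = (p:𝕎)^(d-1) * (if j = 1 then frobenius (f ((d:ℕ):ZMod (2*d))) else 0) := rfl
  rw [h2]
  by_cases hj : j = 1
  · rw [if_pos hj, if_pos hj]; ring
  · rw [if_neg hj, if_neg hj]; ring

/-- part (b2) -/
lemma theta1_sub_theta0' (hd : 2 ≤ d) (f : MM) :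
    ∃ g : MM, theta1 p k d f - theta0 p k d f = ((p:𝕎)^(d-1)) • g := by
  refine ⟨fun i => if i = 0 then -(sinv p k (f (((d:ℕ):ZMod (2*d)) + 1))) else 0, ?_⟩
  funext i
  have h1 : (theta1 p k d f - theta0 p k d f) i = theta1 p k d f i - theta0 p k d f i := rfl
  rw [h1, theta1_sub_theta0 p k d hd]
  have h2 : (((p:𝕎)^(d-1)) • fun i => if i = 0 then -(sinv p k (f (((d:ℕ):ZMod (2*d)) + 1))) else 0) i
      = (p:𝕎)^(d-1) * (if i = 0 then -(sinv p k (f (((d:ℕ):ZMod (2*d)) + 1))) else 0) := rfl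
  rw [h2]
  by_cases hi : i = 0
  · rw [if_pos hi, if_pos hi]; ring
  · rw [if_neg hi, if_neg hi]; ring

lemma theta0_sub (f g : MM) : theta0 p k d (f - g) = theta0 p k d f - theta0 p k d g := by
  funext i
  have h1 : (f - g) (i+1) = f (i+1) - g (i+1) := rfl
  simp only [theta0, h1, mul_sub, map_sub]
  rfl

lemma theta0_psmul (s : ℕ) (f : MM) :
    theta0 p k d ((p:𝕎)^s • f) = (p:𝕎)^s • theta0 p k d f := by
  funext i
  have h1 : ((p:𝕎)^s • f) (i+1) = (p:𝕎)^s * f (i+1) := rfl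
  have h2 : ((p:𝕎)^s • theta0 p k d f) i = (p:𝕎)^s * theta0 p k d f i := rfl
  simp only [theta0, h1, h2]
  rw [show (if i.val < d then (p:𝕎) else 1) * ((p:𝕎)^s * f (i+1))
      = (p:𝕎)^s * ((if i.val < d then (p:𝕎) else 1) * f (i+1)) by ring,
    map_mul, sinv_pow_p]

lemma mem_pPow (s : ℕ) (u : MM) :
    u ∈ pPowSub p k MM s ↔ ∃ w : MM, ((p:𝕎)^s) • w = u := by
  constructor
  · rintro ⟨w, hw⟩
    exact ⟨w, hw⟩
  · rintro ⟨w, hw⟩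
    exact ⟨w, hw⟩

end C6

section C7
variable (p : ℕ) [Fact p.Prime] (k : Type) [Field k] [IsAlgClosed k] [CharP k p] (d : ℕ)

local notation "𝕎" => WittVector p k
local notation "MM" => (ZMod (2*d) → WittVector p k)

/-- basis vector -/
noncomputable def sv (a : ZMod (2*d)) : MM := fun j => if j = a then 1 else 0

lemma frob_sv (a j : ZMod (2*d)) : frobenius (sv p k d a j) = sv p k d a j := by
  simp only [sv]
  split_ifs <;> simp

lemma phi1_sv_lt (hd : 2 ≤ d) (a : ZMod (2*d)) (ha : a.val < d) (ha' : a ≠ ((d:ℕ):ZMod (2*d))) :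
    CdPhi1 p k d (sv p k d a) = sv p k d (a+1) := by
  funext j
  rw [CdPhi1_apply, CdPhi_apply]
  have hda : sv p k d a ((d:ℕ):ZMod (2*d)) = 0 := by
    simp only [sv, if_neg (Ne.symm ha')]
  rw [hda]
  simp only [map_zero, mul_zero, ite_self, add_zero]
  have hsub : j - 1 = a ↔ j = a + 1 := sub_eq_iff_eq_add
  by_cases hj : j = a + 1
  · have h1 : j - 1 = a := hsub.mpr hj
    rw [h1, if_pos ha]
    simp only [sv, eq_self_iff_true, if_true, if_pos hj, map_one, one_mul]
  · have h1 : ¬ (j - 1 = a) := fun h => hj (hsub.mp h)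
    simp only [sv, if_neg h1, if_neg hj, map_zero, mul_zero]

lemma phi1_sv_ge (hd : 2 ≤ d) (a : ZMod (2*d)) (ha : ¬ a.val < d)
    (ha' : a ≠ ((d:ℕ):ZMod (2*d))) :
    CdPhi1 p k d (sv p k d a) = (p:𝕎) • sv p k d (a+1) := by
  funext j
  rw [CdPhi1_apply, CdPhi_apply]
  have hda : sv p k d a ((d:ℕ):ZMod (2*d)) = 0 := by
    simp only [sv, if_neg (Ne.symm ha')]
  rw [hda]
  simp only [map_zero, mul_zero, ite_self, add_zero]
  have hs : ((p:𝕎) • sv p k d (a+1)) j = (p:𝕎) * sv p k d (a+1) j := rfl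
  rw [hs]
  have hsub : j - 1 = a ↔ j = a + 1 := sub_eq_iff_eq_add
  by_cases hj : j = a + 1
  · have h1 : j - 1 = a := hsub.mpr hj
    rw [h1, if_neg ha]
    simp only [sv, eq_self_iff_true, if_true, if_pos hj, map_one, mul_one]
  · have h1 : ¬ (j - 1 = a) := fun h => hj (hsub.mp h)
    simp only [sv, if_neg h1, if_neg hj, map_zero, mul_zero]

lemma phi1_sv_d (hd : 2 ≤ d) :
    CdPhi1 p k d (sv p k d ((d:ℕ):ZMod (2*d)))
      = (p:𝕎) • sv p k d (((d:ℕ):ZMod (2*d))+1) + (p:𝕎)^(d-1) • sv p k d 1 := by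
  haveI : NeZero (2*d) := ⟨by omega⟩
  funext j
  rw [CdPhi1_apply, CdPhi_apply]
  have hda : sv p k d ((d:ℕ):ZMod (2*d)) ((d:ℕ):ZMod (2*d)) = 1 := by
    simp [sv]
  rw [hda, map_one, mul_one]
  have hs : ((p:𝕎) • sv p k d (((d:ℕ):ZMod (2*d))+1) + (p:𝕎)^(d-1) • sv p k d 1) j
      = (p:𝕎) * sv p k d (((d:ℕ):ZMod (2*d))+1) j + (p:𝕎)^(d-1) * sv p k d 1 j := rfl
  rw [hs]
  have hval : ¬ (((d:ℕ):ZMod (2*d)).val < d) := by rw [val_d d hd]; omega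
  have hsub : j - 1 = ((d:ℕ):ZMod (2*d)) ↔ j = ((d:ℕ):ZMod (2*d)) + 1 := sub_eq_iff_eq_add
  by_cases hj : j = ((d:ℕ):ZMod (2*d)) + 1
  · have h1 : j - 1 = ((d:ℕ):ZMod (2*d)) := hsub.mpr hj
    rw [h1, if_neg hval]
    have hj1 : j ≠ 1 := by
      rw [hj]
      intro h
      have : ((d:ℕ):ZMod (2*d)) = 0 := by
        have := add_right_cancel (h.trans (zero_add 1).symm)
        exact this
      exact d_ne_zero d hd this
    simp only [sv, eq_self_iff_true, if_true, if_pos hj, if_neg hj1, map_one, mul_one, mul_zero, add_zero]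
  · have h1 : ¬ (j - 1 = ((d:ℕ):ZMod (2*d))) := fun h => hj (hsub.mp h)
    simp only [sv, if_neg h1, if_neg hj, map_zero, mul_zero, mul_one, zero_add, mul_zero]
    by_cases hj1 : j = 1
    · rw [if_pos hj1, if_pos hj1]; ring
    · rw [if_neg hj1, if_neg hj1]; ring

lemma orb1 (hd : 2 ≤ d) : ∀ t, t ≤ d →
    (⇑(CdPhi1 p k d))^[t] (sv p k d 0) = sv p k d ((t:ℕ):ZMod (2*d)) := by
  haveI : NeZero (2*d) := ⟨by omega⟩
  intro t
  induction t with
  | zero => intro _; norm_num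
  | succ t ih =>
    intro ht
    have htd : t < d := by omega
    rw [Function.iterate_succ_apply', ih (by omega)]
    have hval : ((t:ℕ):ZMod (2*d)).val < d := by
      rw [ZMod.val_cast_of_lt (by omega : t < 2*d)]; omega
    have hne : ((t:ℕ):ZMod (2*d)) ≠ ((d:ℕ):ZMod (2*d)) := by
      intro h
      have h2 := congrArg ZMod.val h
      rw [ZMod.val_cast_of_lt (by omega : t < 2*d), val_d d hd] at h2
      omega
    rw [phi1_sv_lt p k d hd _ hval hne]
    congr 1
    push_cast
    ring

lemma orb2 (hd : 2 ≤ d) : ∀ t, 1 ≤ t → t ≤ d →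
    (⇑(CdPhi1 p k d))^[t] (sv p k d ((d:ℕ):ZMod (2*d)))
      = (p:𝕎)^t • sv p k d (((d+t:ℕ)):ZMod (2*d)) + (p:𝕎)^(d-1) • sv p k d ((t:ℕ):ZMod (2*d)) := by
  haveI : NeZero (2*d) := ⟨by omega⟩
  intro t
  induction t with
  | zero => omega
  | succ t ih =>
    intro _ ht
    by_cases ht1 : t = 0
    · subst ht1
      rw [Function.iterate_one, phi1_sv_d p k d hd]
      norm_num
    · have ih2 := ih (by omega) (by omega)
      rw [Function.iterate_succ_apply', ih2, map_add]
      rw [CdPhi1_psmul, CdPhi1_psmul]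
      have hvdt : ((d+t:ℕ):ZMod (2*d)).val = d + t := ZMod.val_cast_of_lt (by omega)
      have hne : ((d+t:ℕ):ZMod (2*d)) ≠ ((d:ℕ):ZMod (2*d)) := by
        intro h
        have h2 := congrArg ZMod.val h
        rw [hvdt, val_d d hd] at h2
        omega
      rw [phi1_sv_ge p k d hd _ (by rw [hvdt]; omega) hne]
      have hvt : ((t:ℕ):ZMod (2*d)).val < d := by
        rw [ZMod.val_cast_of_lt (by omega : t < 2*d)]; omega
      have hnet : ((t:ℕ):ZMod (2*d)) ≠ ((d:ℕ):ZMod (2*d)) := by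
        intro h
        have h2 := congrArg ZMod.val h
        rw [ZMod.val_cast_of_lt (by omega : t < 2*d), val_d d hd] at h2
        omega
      rw [phi1_sv_lt p k d hd _ hvt hnet]
      rw [smul_comm ((p:𝕎)^t) ((p:𝕎)) _]
      rw [smul_smul, ← pow_succ']
      congr 2
      · push_cast; ring
      · push_cast; ring

lemma orb_2d (hd : 2 ≤ d) :
    (⇑(CdPhi1 p k d))^[2*d] (sv p k d 0)
      = (p:𝕎)^d • sv p k d 0 + (p:𝕎)^(d-1) • sv p k d ((d:ℕ):ZMod (2*d)) := by
  have h1 : (⇑(CdPhi1 p k d))^[2*d] (sv p k d 0)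
      = (⇑(CdPhi1 p k d))^[d] ((⇑(CdPhi1 p k d))^[d] (sv p k d 0)) := by
    rw [← Function.iterate_add_apply]
    congr 1
    ring
  rw [h1, orb1 p k d hd d le_rfl, orb2 p k d hd d (by omega) le_rfl]
  have h2 : ((d + d : ℕ) : ZMod (2*d)) = 0 := by
    rw [show d + d = 2*d from by ring, ZMod.natCast_self]
  rw [h2]

/-- step-counting function for `CdPhi` iterates -/
def wc (d : ℕ) : ℕ → ZMod (2*d) → ℕ
  | 0, _ => 0
  | (n+1), j => wc d n (j-1) + (if ((j-1):ZMod (2*d)).val < d then 0 else 1)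

lemma phi_iter_apply (n : ℕ) (f : MM) (j : ZMod (2*d)) :
    (⇑(CdPhi p k d))^[n] f j
      = (p:𝕎)^(wc d n j) * (fun x => frobenius x)^[n] (f (j - (n:ℕ))) := by
  induction n generalizing j with
  | zero => simp [wc]
  | succ n ih =>
    rw [Function.iterate_succ_apply']
    have h1 : CdPhi p k d ((⇑(CdPhi p k d))^[n] f) j
        = (if ((j-1):ZMod (2*d)).val < d then 1 else (p:𝕎))
          * frobenius ((⇑(CdPhi p k d))^[n] f (j-1)) := rfl
    rw [h1, ih (j-1)]
    rw [map_mul, frob_pow_p]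
    have h2 : frobenius ((fun x => frobenius x)^[n] (f (j - 1 - (n:ℕ))))
        = (fun x => frobenius x)^[n+1] (f (j - 1 - (n:ℕ))) := by
      rw [Function.iterate_succ_apply']
    rw [h2]
    have h3 : j - 1 - (n:ℕ) = j - ((n+1 : ℕ):ZMod (2*d)) := by push_cast; ring
    rw [h3]
    show (if ((j-1):ZMod (2*d)).val < d then 1 else (p:𝕎)) *
        ((p:𝕎)^(wc d n (j-1)) * (fun x => frobenius x)^[n+1] (f (j - ((n+1:ℕ)):ZMod (2*d))))
      = (p:𝕎)^(wc d (n+1) j) * (fun x => frobenius x)^[n+1] (f (j - ((n+1:ℕ)):ZMod (2*d)))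
    have h4 : wc d (n+1) j = wc d n (j-1) + (if ((j-1):ZMod (2*d)).val < d then 0 else 1) := rfl
    rw [h4]
    by_cases h : ((j-1):ZMod (2*d)).val < d
    · rw [if_pos h, if_pos h, one_mul, add_zero]
    · rw [if_neg h, if_neg h, pow_add, pow_one]
      ring

lemma wc_succ_right : ∀ (n : ℕ) (j : ZMod (2*d)),
    wc d (n+1) j = wc d n j + (if ((j - 1 - (n:ℕ)):ZMod (2*d)).val < d then 0 else 1) := by
  intro n
  induction n with
  | zero =>
    intro j
    show wc d 0 (j-1) + _ = _
    simp [wc]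
  | succ n ih =>
    intro j
    show wc d (n+1) (j-1) + (if ((j-1):ZMod (2*d)).val < d then 0 else 1) = _
    rw [ih (j-1)]
    have h1 : wc d (n+1) j = wc d n (j-1) + (if ((j-1):ZMod (2*d)).val < d then 0 else 1) := rfl
    have h2 : j - 1 - 1 - (n:ℕ) = j - 1 - ((n+1:ℕ):ZMod (2*d)) := by push_cast; ring
    rw [h2, h1]
    ring

lemma wc_card (n : ℕ) (j : ZMod (2*d)) :
    wc d n j = ((Finset.range n).filter
      (fun t => ¬ ((j - 1 - (t:ℕ)) : ZMod (2*d)).val < d)).card := by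
  induction n with
  | zero => simp [wc]
  | succ n ih =>
    rw [wc_succ_right, ih, Finset.range_add_one, Finset.filter_insert]
    by_cases hQ : ((j - 1 - (n:ℕ)) : ZMod (2*d)).val < d
    · rw [if_pos hQ, if_neg (by exact fun h => h hQ), add_zero]
    · rw [if_neg hQ, if_pos hQ, Finset.card_insert_of_notMem (by simp)]

lemma wc_2d [NeZero (2*d)] (hd : 2 ≤ d) (j : ZMod (2*d)) : wc d (2*d) j = d := by
  rw [wc_card]
  have hcard2 : ((Finset.range (2*d)).filter (fun v => ¬ v < d)).card = d := by
    have he : (Finset.range (2*d)).filter (fun v => ¬ v < d) = Finset.Ico d (2*d) := by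
      ext v
      simp only [Finset.mem_filter, Finset.mem_range, Finset.mem_Ico]
      omega
    rw [he, Nat.card_Ico]
    omega
  refine Eq.trans (Finset.card_bij' (fun t _ => ((j - 1 - (t:ℕ)) : ZMod (2*d)).val)
    (fun v _ => ((j - 1 - ((v:ℕ):ZMod (2*d))) : ZMod (2*d)).val) ?_ ?_ ?_ ?_) hcard2
  · intro t ht
    simp only [Finset.mem_filter, Finset.mem_range] at ht ⊢
    exact ⟨ZMod.val_lt _, ht.2⟩
  · intro v hv
    simp only [Finset.mem_filter, Finset.mem_range] at hv ⊢
    constructor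
    · exact ZMod.val_lt _
    · have h1 : (((((j - 1 - ((v:ℕ):ZMod (2*d))) : ZMod (2*d)).val : ℕ)) : ZMod (2*d))
          = j - 1 - ((v:ℕ):ZMod (2*d)) := ZMod.natCast_rightInverse _
      rw [h1]
      have h2 : j - 1 - (j - 1 - ((v:ℕ):ZMod (2*d))) = ((v:ℕ):ZMod (2*d)) := by ring
      rw [h2, ZMod.val_cast_of_lt hv.1]
      exact hv.2
  · intro t ht
    simp only [Finset.mem_filter, Finset.mem_range] at ht
    have h1 : ((((j - 1 - ((t:ℕ):ZMod (2*d))) : ZMod (2*d)).val : ℕ) : ZMod (2*d))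
        = j - 1 - ((t:ℕ):ZMod (2*d)) := ZMod.natCast_rightInverse _
    beta_reduce
    rw [h1]
    have h2 : j - 1 - (j - 1 - ((t:ℕ):ZMod (2*d))) = ((t:ℕ):ZMod (2*d)) := by ring
    rw [h2, ZMod.val_cast_of_lt ht.1]
  · intro v hv
    simp only [Finset.mem_filter, Finset.mem_range] at hv
    have h1 : ((((j - 1 - ((v:ℕ):ZMod (2*d))) : ZMod (2*d)).val : ℕ) : ZMod (2*d))
        = j - 1 - ((v:ℕ):ZMod (2*d)) := ZMod.natCast_rightInverse _
    beta_reduce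
    rw [h1]
    have h2 : j - 1 - (j - 1 - ((v:ℕ):ZMod (2*d))) = ((v:ℕ):ZMod (2*d)) := by ring
    rw [h2, ZMod.val_cast_of_lt hv.1]

lemma phi_iter_2d [NeZero (2*d)] (hd : 2 ≤ d) (f : MM) (j : ZMod (2*d)) :
    (⇑(CdPhi p k d))^[2*d] f j = (p:𝕎)^d * (fun x => frobenius x)^[2*d] (f j) := by
  rw [phi_iter_apply, wc_2d d hd]
  congr 2
  rw [ZMod.natCast_self]
  ring

lemma not_iso (hd : 2 ≤ d) :
    ¬ DIso p k MM MM (CdPhi1 p k d) (CdPhi p k d) := by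
  haveI : NeZero (2*d) := ⟨by omega⟩
  rintro ⟨h, hc⟩
  have hiter : ∀ (n : ℕ) (x : MM),
      h ((⇑(CdPhi1 p k d))^[n] x) = (⇑(CdPhi p k d))^[n] (h x) := by
    intro n
    induction n with
    | zero => intro x; simp
    | succ n ih =>
      intro x
      rw [Function.iterate_succ_apply', Function.iterate_succ_apply', hc, ih]
  set m : MM := h (sv p k d 0) with hm
  have key : (⇑(CdPhi p k d))^[2*d] m
      = (p:𝕎)^d • m + (p:𝕎)^(d-1) • ((⇑(CdPhi p k d))^[d] m) := by
    have h1 := congrArg h (orb_2d p k d hd)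
    rw [hiter] at h1
    rw [map_add, map_smul, map_smul] at h1
    have h2 : h (sv p k d ((d:ℕ):ZMod (2*d))) = (⇑(CdPhi p k d))^[d] m := by
      rw [← orb1 p k d hd d le_rfl, hiter]
    rw [h2] at h1
    exact h1
  have hphid : (⇑(CdPhi p k d))^[d] m
      = (p:𝕎) • (fun j => (fun x => frobenius x)^[2*d] (m j) - m j) := by
    funext j
    have hk := congrFun key j
    rw [phi_iter_2d p k d hd] at hk
    have hk2 : ((p:𝕎)^d • m + (p:𝕎)^(d-1) • ((⇑(CdPhi p k d))^[d] m)) j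
        = (p:𝕎)^d * m j + (p:𝕎)^(d-1) * ((⇑(CdPhi p k d))^[d] m) j := rfl
    rw [hk2] at hk
    have hpd : (p:𝕎)^d = (p:𝕎)^(d-1) * (p:𝕎) := by
      rw [← pow_succ]
      congr 1
      omega
    have hs : ((p:𝕎) • (fun j => (fun x => frobenius x)^[2*d] (m j) - m j)) j
        = (p:𝕎) * ((fun x => frobenius x)^[2*d] (m j) - m j) := rfl
    rw [hs]
    have h3 : (p:𝕎) * (fun x => frobenius x)^[2*d] (m j)
        = (p:𝕎) * m j + ((⇑(CdPhi p k d))^[d] m) j := by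
      apply mul_left_cancel₀ (pow_ne_zero (d-1) (p_neZero p k))
      linear_combination hk - ((fun x => frobenius x)^[2*d] (m j) - m j) * hpd
    linear_combination -h3
  have hsd : sv p k d ((d:ℕ):ZMod (2*d))
      = (p:𝕎) • h.symm (fun j => (fun x => frobenius x)^[2*d] (m j) - m j) := by
    have h2 : h (sv p k d ((d:ℕ):ZMod (2*d))) = (⇑(CdPhi p k d))^[d] m := by
      rw [← orb1 p k d hd d le_rfl, hiter]
    have h3 := congrArg h.symm (h2.trans hphid)
    rw [LinearEquiv.symm_apply_apply, map_smul] at h3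
    exact h3
  have h1 := congrFun hsd ((d:ℕ):ZMod (2*d))
  have hlhs : sv p k d ((d:ℕ):ZMod (2*d)) ((d:ℕ):ZMod (2*d)) = 1 := by simp [sv]
  rw [hlhs] at h1
  have hrhs : ((p:𝕎) • h.symm (fun j => (fun x => frobenius x)^[2*d] (m j) - m j))
      ((d:ℕ):ZMod (2*d)) = (p:𝕎) * (h.symm (fun j => (fun x => frobenius x)^[2*d] (m j) - m j))
      ((d:ℕ):ZMod (2*d)) := rfl
  rw [hrhs] at h1
  exact (WittVector.irreducible p).not_isUnit (IsUnit.of_mul_eq_one _ h1.symm)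

end C7
variable (p : ℕ) [Fact p.Prime] (k : Type) [Field k] [IsAlgClosed k] [CharP k p]


/-- **Example 3.3 (optimality).** For `d ≥ 2`, the Dieudonné modules `(M, φ) = C_d` and
`(M, φ₁)` are supersingular, congruent mod `p^(d-1)` (hence have isomorphic level-`(d-1)`
truncations), but are not isomorphic; so the bound `d` in Theorem 1.2 is optimal. -/
theorem cd_example (d : ℕ) (hd : 2 ≤ d) :
    (IsDieudonne p k (ZMod (2 * d) → WittVector p k) (CdPhi1 p k d) ∧
      IsSupersingular p k (ZMod (2 * d) → WittVector p k) (CdPhi1 p k d)) ∧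
    ((∀ f : ZMod (2 * d) → WittVector p k, ∃ g : ZMod (2 * d) → WittVector p k,
        CdPhi1 p k d f - CdPhi p k d f = ((p : WittVector p k)^(d - 1)) • g) ∧
      (∀ ϑ ϑ₁ : (ZMod (2 * d) → WittVector p k) →+ (ZMod (2 * d) → WittVector p k),
        IsVerschiebung p k (ZMod (2 * d) → WittVector p k) (CdPhi p k d) ϑ →
        IsVerschiebung p k (ZMod (2 * d) → WittVector p k) (CdPhi1 p k d) ϑ₁ →
        (∀ f : ZMod (2 * d) → WittVector p k, ∃ g : ZMod (2 * d) → WittVector p k,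
          ϑ₁ f - ϑ f = ((p : WittVector p k)^(d - 1)) • g) ∧
        TruncIso p k (ZMod (2 * d) → WittVector p k) (ZMod (2 * d) → WittVector p k) (d - 1)
          (CdPhi1 p k d) ϑ₁ (CdPhi p k d) ϑ)) ∧
    ¬ DIso p k (ZMod (2 * d) → WittVector p k) (ZMod (2 * d) → WittVector p k)
        (CdPhi1 p k d) (CdPhi p k d) := by
  haveI : NeZero (2*d) := ⟨by omega⟩
  refine ⟨⟨dieudonne1 p k d hd, supersingular1 p k d hd⟩, ⟨phi1_sub_phi p k d, ?_⟩,
    not_iso p k d hd⟩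
  intro ϑ ϑ₁ hϑ hϑ₁
  constructor
  · intro f
    obtain ⟨g, hg⟩ := theta1_sub_theta0' p k d hd f
    refine ⟨g, ?_⟩
    rw [theta1_unique p k d hd ϑ₁ hϑ₁ f, theta_unique p k d ϑ hϑ f]
    exact hg
  · refine ⟨LinearEquiv.refl (WittVector p k) _, ?_, ?_⟩
    · intro x y hxy
      simp only [LinearEquiv.refl_apply] at hxy ⊢
      rw [Submodule.Quotient.eq] at hxy ⊢
      obtain ⟨w, hw⟩ := (mem_pPow p k d (d-1) _).mp hxy
      obtain ⟨g, hg⟩ := phi1_sub_phi p k d x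
      refine (mem_pPow p k d (d-1) _).mpr ⟨g + CdPhi p k d w, ?_⟩
      rw [smul_add, ← hg]
      have h2 : ((p : WittVector p k)^(d-1)) • CdPhi p k d w
          = CdPhi p k d x - CdPhi p k d y := by
        rw [← CdPhi_psmul, hw, map_sub]
      rw [h2]
      abel
    · intro x y hxy
      simp only [LinearEquiv.refl_apply] at hxy ⊢
      rw [Submodule.Quotient.eq] at hxy ⊢
      obtain ⟨w, hw⟩ := (mem_pPow p k d (d-1) _).mp hxy
      obtain ⟨g, hg⟩ := theta1_sub_theta0' p k d hd x
      refine (mem_pPow p k d (d-1) _).mpr ⟨g + theta0 p k d w, ?_⟩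
      rw [theta1_unique p k d hd ϑ₁ hϑ₁ x, theta_unique p k d ϑ hϑ y]
      rw [smul_add, ← hg]
      have h2 : ((p : WittVector p k)^(d-1)) • theta0 p k d w
          = theta0 p k d x - theta0 p k d y := by
        rw [← theta0_psmul, hw, theta0_sub]
      rw [h2]
      abel
end

section
/- Let d ≥ 2 and 2 ≤ s ≤ d. Let (M, φ) be the direct sum of the Dieudonné module C_s (of rank 2s) and N^{d−s} (a direct sum of d − s copies of (N, φ_N)), a supersingular Dieudonné module of rank 2d. Then the invariant q of (M, φ) equals s − 1. In particular, as s varies (together with the case (M, φ) = (N^d, φ_N), for which q = 0), the invariant q takes every value in {0, 1, …, d − 1}. -/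
set_option linter.unusedSectionVars false
set_option linter.unusedVariables false
set_option maxHeartbeats 1000000


open WittVector

section Defs

variable (p : ℕ) [Fact p.Prime] (k : Type) [CommRing k] [CharP k p]

/-- The Dieudonné module `(N, φ_N)`: `N` free of rank `2` on a basis `{x, y}` with
`φ_N x = y`, `φ_N y = p·x`, realized on `W(k) × W(k)` with `x = (1,0)`, `y = (0,1)`. -/
noncomputable def Nphi :
    (WittVector p k × WittVector p k) →+ (WittVector p k × WittVector p k) where
  toFun ab := ((p : WittVector p k) * WittVector.frobenius ab.2, WittVector.frobenius ab.1)
  map_zero' := by simp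
  map_add' a b := by simp [Prod.ext_iff, mul_add]

/-- The Dieudonné module `(N^d, φ_N)`, the direct sum of `d` copies of `(N, φ_N)`. -/
noncomputable def NdPhi (d : ℕ) :
    (Fin d → WittVector p k × WittVector p k) →+ (Fin d → WittVector p k × WittVector p k) where
  toFun f i := Nphi p k (f i)
  map_zero' := by ext i : 1; simp
  map_add' f g := by ext i : 1; simp

/-- There is a monomorphism `j : (N^d, φ_N) ↪ (M, φ)` with `φ^q(M) ⊆ j(N^d)`. -/
noncomputable def QEmbed (M : Type) [AddCommGroup M] [Module (WittVector p k) M]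
    (d : ℕ) (φ : M →+ M) (q : ℕ) : Prop :=
  ∃ j : (Fin d → WittVector p k × WittVector p k) →ₗ[WittVector p k] M,
    Function.Injective j ∧ (∀ x, j (NdPhi p k d x) = φ (j x)) ∧
    ∀ m : M, (⇑φ)^[q] m ∈ Set.range j

end Defs

section Aux
variable (p : ℕ) [Fact p.Prime] (k : Type) [Field k] [IsAlgClosed k] [CharP k p]
local notation "W" => WittVector p k

lemma frob_teich (ζ : k) : frobenius (teichmuller p ζ) = teichmuller p (ζ ^ p) := by
  ext n
  rw [coeff_frobenius_charP]
  cases n with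
  | zero => rw [teichmuller_coeff_zero, teichmuller_coeff_zero]
  | succ n =>
    rw [teichmuller_coeff_pos p _ (n+1) (Nat.succ_pos n),
      teichmuller_coeff_pos p _ (n+1) (Nat.succ_pos n),
      zero_pow (Fact.out (p := p.Prime)).ne_zero]

lemma frob_scaled (a : ℕ) (ζ : k) (m : ℕ) :
    frobenius ((p:W)^a * teichmuller p (ζ^(p^m))) = (p:W)^a * teichmuller p (ζ^(p^(m+1))) := by
  rw [map_mul, map_pow, map_natCast, frob_teich, ← pow_mul, ← pow_succ]

section S
variable (s : ℕ)

lemma zsub1 (hs : 1 ≤ s) (i : ZMod (2*s)) :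
    (i - 1).val = if i.val = 0 then 2*s - 1 else i.val - 1 := by
  haveI : NeZero (2*s) := ⟨by omega⟩
  have hi : ((i.val : ℕ) : ZMod (2*s)) = i := ZMod.natCast_rightInverse i
  have hlt : i.val < 2*s := ZMod.val_lt i
  by_cases h0 : i.val = 0
  · have hi0 : i = 0 := by rw [← hi, h0, Nat.cast_zero]
    rw [if_pos h0, hi0, zero_sub]
    have h1 : ((2*s - 1 : ℕ) : ZMod (2*s)) = -1 := by
      have h2 : ((2*s : ℕ) : ZMod (2*s)) = 0 := ZMod.natCast_self _
      push_cast [Nat.cast_sub (by omega : 1 ≤ 2*s)] at h2 ⊢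
      rw [h2]; ring
    rw [← h1, ZMod.val_cast_of_lt (by omega)]
  · rw [if_neg h0]
    have h3 : ((i.val - 1 : ℕ) : ZMod (2*s)) = i - 1 := by
      rw [Nat.cast_sub (by omega : 1 ≤ i.val), hi, Nat.cast_one]
    rw [← h3, ZMod.val_cast_of_lt (by omega)]

def Vfn (t : ℕ) : ℕ := (if t ≤ s then s - t else t - s) / 2

noncomputable def vecSOL (ζ : k) : ZMod (2*s) → W := fun i =>
  if i.val % 2 = (s-1) % 2 then (p:W)^(Vfn s i.val) * teichmuller p (ζ^(p^i.val)) else 0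

noncomputable def vecT (ζ : k) : ZMod (2*s) → W := fun i =>
  if i.val % 2 = s % 2 then (p:W)^(Vfn s i.val) * teichmuller p (ζ^(p^i.val)) else 0

lemma cdphi_apply (f : ZMod (2*s) → W) (j : ZMod (2*s)) :
    CdPhi p k s f j = (if (j - 1 : ZMod (2*s)).val < s then 1 else (p : W)) *
      frobenius (f (j - 1)) := rfl

lemma step1 (hs : 2 ≤ s) (ζ : k) (hζ : ζ^(p^(2*s)) = ζ) :
    CdPhi p k s (vecSOL p k s ζ) = vecT p k s ζ := by
  haveI : NeZero (2*s) := ⟨by omega⟩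
  funext i
  have hlt : i.val < 2*s := ZMod.val_lt i
  have hsub := zsub1 s (by omega) i
  rw [cdphi_apply]
  show _ = vecT p k s ζ i
  simp only [vecSOL, vecT]
  by_cases h0 : i.val = 0
  · rw [if_pos h0] at hsub
    rw [hsub, h0]
    by_cases hpar : s % 2 = 0
    · rw [if_neg (show ¬(2*s-1 < s) by omega),
        if_pos (show (2*s-1) % 2 = (s-1) % 2 by omega),
        if_pos (show 0 % 2 = s % 2 by omega),
        frob_scaled, (show 2*s-1+1 = 2*s by omega), hζ,
        ← mul_assoc, ← pow_succ',
        (show Vfn s (2*s-1) + 1 = Vfn s 0 by simp only [Vfn]; split_ifs <;> omega),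
        pow_zero, pow_one]
    · rw [if_neg (show ¬((2*s-1) % 2 = (s-1) % 2) by omega),
        if_neg (show ¬(0 % 2 = s % 2) by omega), map_zero, mul_zero]
  · rw [if_neg h0] at hsub
    rw [hsub]
    by_cases hpar : i.val % 2 = s % 2
    · rw [if_pos (show (i.val-1) % 2 = (s-1) % 2 by omega),
        if_pos (show i.val % 2 = s % 2 from hpar),
        frob_scaled, (show i.val-1+1 = i.val by omega)]
      by_cases hc : i.val - 1 < s
      · rw [if_pos (show i.val-1 < s from hc), one_mul,
          (show Vfn s (i.val-1) = Vfn s i.val by simp only [Vfn]; split_ifs <;> omega)]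
      · rw [if_neg (show ¬(i.val-1 < s) from hc), ← mul_assoc, ← pow_succ',
          (show Vfn s (i.val-1) + 1 = Vfn s i.val by simp only [Vfn]; split_ifs <;> omega)]
    · rw [if_neg (show ¬((i.val-1) % 2 = (s-1) % 2) by omega),
        if_neg (show ¬(i.val % 2 = s % 2) from hpar), map_zero, mul_zero]

lemma step2 (hs : 2 ≤ s) (ζ : k) (hζ : ζ^(p^(2*s)) = ζ) :
    CdPhi p k s (vecT p k s ζ) = (p:W) • vecSOL p k s ζ := by
  haveI : NeZero (2*s) := ⟨by omega⟩
  funext i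
  have hlt : i.val < 2*s := ZMod.val_lt i
  have hsub := zsub1 s (by omega) i
  rw [cdphi_apply]
  show _ = ((p:W) • vecSOL p k s ζ) i
  rw [Pi.smul_apply, smul_eq_mul]
  simp only [vecSOL, vecT]
  by_cases h0 : i.val = 0
  · rw [if_pos h0] at hsub
    rw [hsub, h0]
    by_cases hpar : s % 2 = 1
    · rw [if_neg (show ¬(2*s-1 < s) by omega),
        if_pos (show (2*s-1) % 2 = s % 2 by omega),
        if_pos (show 0 % 2 = (s-1) % 2 by omega),
        frob_scaled, (show 2*s-1+1 = 2*s by omega), hζ,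
        (show Vfn s (2*s-1) = Vfn s 0 by simp only [Vfn]; split_ifs <;> omega),
        pow_zero, pow_one]
    · rw [if_neg (show ¬((2*s-1) % 2 = s % 2) by omega),
        if_neg (show ¬(0 % 2 = (s-1) % 2) by omega), map_zero, mul_zero, mul_zero]
  · rw [if_neg h0] at hsub
    rw [hsub]
    by_cases hpar : i.val % 2 = (s-1) % 2
    · rw [if_pos (show (i.val-1) % 2 = s % 2 by omega),
        if_pos (show i.val % 2 = (s-1) % 2 from hpar),
        frob_scaled, (show i.val-1+1 = i.val by omega)]
      by_cases hc : i.val - 1 < s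
      · rw [if_pos (show i.val-1 < s from hc), one_mul, ← mul_assoc, ← pow_succ',
          (show Vfn s (i.val-1) = Vfn s i.val + 1 by simp only [Vfn]; split_ifs <;> omega)]
      · rw [if_neg (show ¬(i.val-1 < s) from hc),
          (show Vfn s (i.val-1) = Vfn s i.val by simp only [Vfn]; split_ifs <;> omega),
]
    · rw [if_neg (show ¬((i.val-1) % 2 = s % 2) by omega),
        if_neg (show ¬(i.val % 2 = (s-1) % 2) from hpar), map_zero, mul_zero, mul_zero]

end S

lemma res_coeff (x : W) : ghostComponent 0 x = x.coeff 0 := by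
  simp [ghostComponent_apply, wittPolynomial_zero]

lemma res_p : ghostComponent (R := k) 0 (p : W) = 0 := by
  rw [map_natCast]; exact CharP.cast_eq_zero k p

lemma pdvd_of_coeff_zero (x : W) (hx : x.coeff 0 = 0) : ∃ y : W, x = p * y := by
  refine ⟨(frobeniusEquiv p k).symm (x.shift 1), ?_⟩
  have h2 : frobenius ((frobeniusEquiv p k).symm (x.shift 1)) = x.shift 1 :=
    (frobeniusEquiv p k).apply_symm_apply _
  calc x = verschiebung^[1] (x.shift 1) := by
            exact WittVector.eq_iterate_verschiebung (x := x) (n := 1) (by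
              intro i hi; interval_cases i; exact hx)
    _ = verschiebung (frobenius ((frobeniusEquiv p k).symm (x.shift 1))) := by rw [h2]; rfl
    _ = _ := by rw [verschiebung_frobenius, mul_comm]

lemma res_teich (z : k) : ghostComponent 0 (teichmuller p z) = z := by
  rw [res_coeff, teichmuller_coeff_zero]

lemma p_ne_zero : (p : W) ≠ 0 := (WittVector.irreducible (p := p) (k := k)).ne_zero

/-- **Nakayama-style surjectivity** -/
lemma surj_of_p_approx {A B : Type} [AddCommGroup A] [Module W A] [AddCommGroup B]
    [Module W B] [Module.Finite (WittVector p k) B] (f : A →ₗ[W] B)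
    (h : ∀ x : B, ∃ c y, x = f c + (p : W) • y) : Function.Surjective f := by
  set R := LinearMap.range f with hR
  have hQ : (⊤ : Submodule W (B ⧸ R)) = ⊥ := by
    refine Submodule.eq_bot_of_le_smul_of_le_jacobson_bot (Ideal.span {(p : W)}) ⊤
      (Module.Finite.fg_top) ?_ ?_
    · rintro q -
      obtain ⟨x, rfl⟩ := R.mkQ_surjective q
      obtain ⟨c, y, hx⟩ := h x
      have h2 : R.mkQ (f c) = 0 := by
        rw [Submodule.mkQ_apply, Submodule.Quotient.mk_eq_zero]
        exact ⟨c, rfl⟩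
      have h1 : R.mkQ x = (p : W) • R.mkQ y := by
        rw [hx, map_add, map_smul, h2, zero_add]
      rw [h1]
      exact Submodule.smul_mem_smul (Ideal.subset_span (Set.mem_singleton _)) trivial
    · rw [Ideal.span_le, Set.singleton_subset_iff]
      rw [SetLike.mem_coe, Ideal.mem_jacobson_bot]
      intro y
      apply isUnit_of_coeff_zero_ne_zero
      rw [← res_coeff]
      rw [map_add, map_mul, res_p, zero_mul, map_one, zero_add]
      exact one_ne_zero
  intro x
  have : R.mkQ x = 0 := by rw [← Submodule.mem_bot (R := W), ← hQ]; trivial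
  exact (Submodule.Quotient.mk_eq_zero R).1 this

section S2
variable (s : ℕ)

/-- Moore-type spanning lemma. -/
lemma span_moore (b : ℕ) (hb : b ≤ 1) (hs : 1 ≤ s) :
    Submodule.span k {v : Fin s → k |
      ∃ ζ : k, ζ^(p^(2*s)) = ζ ∧ v = fun u => ζ^(p^(b + 2*u.val))} = ⊤ := by
  have hp1 : 1 < p := (Fact.out (p := p.Prime)).one_lt
  by_contra hne
  obtain ⟨φ, hφ0, hφ⟩ := Submodule.exists_dual_map_eq_bot_of_lt_top
    (lt_top_iff_ne_top.2 hne) inferInstance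
  set c : Fin s → k := fun u => φ (fun j => if u = j then 1 else 0) with hc
  have happ : ∀ x : Fin s → k, φ x = ∑ u, x u * c u := by
    intro x
    rw [LinearMap.pi_apply_eq_sum_univ φ x]
    exact Finset.sum_congr rfl fun u _ => by rw [smul_eq_mul]
  have hcne : ∃ u, c u ≠ 0 := by
    by_contra hall
    push_neg at hall
    apply hφ0
    apply LinearMap.ext
    intro x
    rw [LinearMap.zero_apply, happ]
    simp [hall]
  obtain ⟨u0, hu0⟩ := hcne
  set P : Polynomial k := ∑ u : Fin s, Polynomial.C (c u) * Polynomial.X^(p^(b + 2*u.val)) with hP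
  have hPcoeff : P.coeff (p^(b + 2*u0.val)) = c u0 := by
    rw [hP, Polynomial.finset_sum_coeff]
    rw [Finset.sum_eq_single u0]
    · rw [Polynomial.coeff_C_mul, Polynomial.coeff_X_pow, if_pos rfl, mul_one]
    · intro v _ hv
      rw [Polynomial.coeff_C_mul, Polynomial.coeff_X_pow,
        if_neg (fun hh : p^(b + 2*u0.val) = p^(b + 2*v.val) => by
          have := Nat.pow_right_injective (by omega : 2 ≤ p) hh
          exact hv (Fin.ext (by omega)) ), mul_zero]
    · intro h; exact absurd (Finset.mem_univ u0) h
  have hPne : P ≠ 0 := fun h => hu0 (by rw [← hPcoeff, h, Polynomial.coeff_zero])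
  set Q : Polynomial k := Polynomial.X^(p^(2*s)) - Polynomial.X with hQdef
  have hQdeg : Q.natDegree = p^(2*s) := by
    rw [hQdef]
    have : (Polynomial.X : Polynomial k).natDegree < (Polynomial.X^(p^(2*s)) : Polynomial k).natDegree := by
      rw [Polynomial.natDegree_X, Polynomial.natDegree_X_pow]
      exact lt_of_lt_of_le hp1 (Nat.le_self_pow (by omega) p)
    rw [Polynomial.natDegree_sub_eq_left_of_natDegree_lt this, Polynomial.natDegree_X_pow]
  have hQsep : Q.Separable := by
    have hder : Polynomial.derivative Q = -1 := by
      rw [hQdef, map_sub, Polynomial.derivative_X_pow, Polynomial.derivative_X]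
      rw [show ((p^(2*s) : ℕ) : k) = 0 by
        push_cast [CharP.cast_eq_zero k p]; exact zero_pow (by omega)]
      rw [map_zero, zero_mul, zero_sub]
    exact ⟨0, -1, by rw [hder]; ring⟩
  have hcard : Fintype.card (Q.rootSet k) = p^(2*s) := by
    rw [Polynomial.card_rootSet_eq_natDegree hQsep (IsAlgClosed.splits (Q.map (algebraMap k k))), hQdeg]
  set Z : Finset k := (Q.rootSet k).toFinset with hZ
  have hZcard : Z.card = p^(2*s) := by rw [hZ, Set.toFinset_card, hcard]
  have hZroots : Z.val ⊆ P.roots := by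
    intro x hx
    have hx2 : x ∈ Q.rootSet k := by
      rw [← Set.mem_toFinset]; exact Finset.mem_val ▸ hx
    rw [Polynomial.mem_rootSet] at hx2
    have hfix : x^(p^(2*s)) = x := by
      have h3 := hx2.2
      rw [hQdef, map_sub, map_pow, Polynomial.aeval_X] at h3
      linear_combination h3
    rw [Polynomial.mem_roots hPne]
    show P.eval x = 0
    have hvS : (fun u : Fin s => x^(p^(b + 2*u.val))) ∈ {v : Fin s → k |
        ∃ ζ : k, ζ^(p^(2*s)) = ζ ∧ v = fun u => ζ^(p^(b + 2*u.val))} := ⟨x, hfix, rfl⟩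
    have hφv : φ (fun u : Fin s => x^(p^(b + 2*u.val))) = 0 := by
      have : φ (fun u : Fin s => x^(p^(b + 2*u.val))) ∈ Submodule.map φ
          (Submodule.span k {v : Fin s → k |
            ∃ ζ : k, ζ^(p^(2*s)) = ζ ∧ v = fun u => ζ^(p^(b + 2*u.val))}) :=
        Submodule.mem_map_of_mem (Submodule.subset_span hvS)
      rwa [hφ, Submodule.mem_bot] at this
    rw [happ] at hφv
    rw [hP, Polynomial.eval_finset_sum]
    rw [← hφv]
    refine Finset.sum_congr rfl fun u _ => ?_
    rw [Polynomial.eval_mul, Polynomial.eval_C, Polynomial.eval_pow, Polynomial.eval_X, mul_comm]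
  have hPdeg : P.natDegree ≤ p^(2*s-1) := by
    rw [hP]
    apply Polynomial.natDegree_sum_le_of_forall_le
    intro u _
    refine le_trans (Polynomial.natDegree_C_mul_le _ _) ?_
    rw [Polynomial.natDegree_X_pow]
    exact Nat.pow_le_pow_right (by omega) (by omega)
  have hfin := (Polynomial.card_le_degree_of_subset_roots hZroots).trans hPdeg
  rw [hZcard] at hfin
  have := Nat.pow_lt_pow_right hp1 (show 2*s-1 < 2*s by omega)
  omega

lemma span_transfer (w w' : Fin s → Fin s → k) (ρ : Equiv.Perm (Fin s))
    (hrel : ∀ t v, w' t (ρ v) = (w t v)^p)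
    (hspan : Submodule.span k (Set.range w) = ⊤) :
    Submodule.span k (Set.range w') = ⊤ := by
  rw [eq_top_iff]
  rintro x -
  set y : Fin s → k := fun v => (frobeniusEquiv k p).symm (x (ρ v)) with hy
  have hmem : y ∈ Submodule.span k (Set.range w) := by rw [hspan]; trivial
  obtain ⟨c, hc⟩ := (Submodule.mem_span_range_iff_exists_fun k).1 hmem
  apply (Submodule.mem_span_range_iff_exists_fun k).2
  refine ⟨fun t => (c t)^p, ?_⟩
  funext u
  rw [Finset.sum_apply]
  have hu : ρ (ρ.symm u) = u := ρ.apply_symm_apply u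
  set v := ρ.symm u with hv
  calc ∑ t, ((c t)^p • w' t) u = ∑ t, (c t * w t v)^p := by
        refine Finset.sum_congr rfl fun t _ => ?_
        rw [Pi.smul_apply, smul_eq_mul, ← hu, hrel t v, mul_pow]
    _ = (∑ t, c t * w t v)^p := by
        simp only [← frobenius_def (p := p) (R := k)]
        exact (map_sum (_root_.frobenius k p) (fun t => c t * w t v) Finset.univ).symm
    _ = (y v)^p := by
        rw [← hc, Finset.sum_apply]
        refine congrArg (·^p) (Finset.sum_congr rfl fun t _ => ?_)
        rw [Pi.smul_apply, smul_eq_mul]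
    _ = x u := by
        show ((_root_.frobeniusEquiv k p).symm (x (ρ v)))^p = x u
        have h5 : ((_root_.frobeniusEquiv k p) ((_root_.frobeniusEquiv k p).symm (x (ρ v)))) = x (ρ v) :=
          (_root_.frobeniusEquiv k p).apply_symm_apply _
        rw [_root_.frobeniusEquiv_apply, frobenius_def] at h5
        rw [h5, hu]

lemma exists_zeta (hs : 2 ≤ s) :
    ∃ ζ : Fin s → k, (∀ t, (ζ t)^(p^(2*s)) = (ζ t)) ∧
      ∀ b : ℕ, b ≤ 1 → Submodule.span k
        (Set.range (fun t => fun u : Fin s => (ζ t)^(p^(b + 2*u.val)))) = ⊤ := by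
  obtain ⟨B, hBS, hBspan, hBli⟩ := exists_linearIndependent k
    {v : Fin s → k | ∃ z : k, z^(p^(2*s)) = z ∧ v = fun u => z^(p^((s-1) % 2 + 2*u.val))}
  rw [span_moore p k s ((s-1) % 2) (by omega) (by omega)] at hBspan
  let bas : Module.Basis B k (Fin s → k) := Module.Basis.mk hBli (by rw [Subtype.range_coe, hBspan])
  haveI : Fintype B := FiniteDimensional.fintypeBasisIndex bas
  have hcard : Fintype.card B = s := by
    have h1 := Module.finrank_eq_card_basis bas
    rw [Module.finrank_pi, Fintype.card_fin] at h1
    omega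
  let e : Fin s ≃ B := Fintype.equivOfCardEq (by rw [hcard, Fintype.card_fin])
  have hSel : ∀ t : Fin s, ∃ z : k, z^(p^(2*s)) = z ∧
      ((e t : Fin s → k)) = fun u => z^(p^((s-1) % 2 + 2*u.val)) := fun t => hBS (e t).2
  choose ζ hfix hvec using hSel
  refine ⟨ζ, hfix, ?_⟩
  have hspan_a : Submodule.span k
      (Set.range (fun t => fun u : Fin s => (ζ t)^(p^((s-1) % 2 + 2*u.val)))) = ⊤ := by
    have hrange : (Set.range (fun t => fun u : Fin s => (ζ t)^(p^((s-1) % 2 + 2*u.val)))) = B := by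
      ext v; constructor
      · rintro ⟨t, rfl⟩
        show (fun u => (ζ t)^(p^((s-1) % 2 + 2*u.val))) ∈ B
        rw [← hvec t]; exact (e t).2
      · intro hv
        refine ⟨e.symm ⟨v, hv⟩, ?_⟩
        show (fun u => (ζ (e.symm ⟨v, hv⟩))^(p^((s-1) % 2 + 2*u.val))) = v
        rw [← hvec (e.symm ⟨v,hv⟩), e.apply_symm_apply]
    rw [hrange, hBspan]
  intro b hb
  by_cases hba : b = (s-1) % 2
  · rwa [hba]
  · by_cases hpar : s % 2 = 1
    · refine span_transfer p k s _ _ (Equiv.refl _) (fun t v => ?_) hspan_a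
      show (ζ t)^(p^(b + 2*v.val)) = _
      rw [← pow_mul, ← pow_succ]
      congr 1
      congr 1
      omega
    · -- s even
      obtain ⟨s', rfl⟩ : ∃ s', s = s' + 1 := ⟨s - 1, by omega⟩
      have hfinrot : ∀ v : Fin (s'+1), ((finRotate (s'+1)) v).val =
          if v.val = s' then 0 else v.val + 1 := by
        intro v
        rw [finRotate_succ_apply, Fin.val_add_one]
        by_cases hvv : v = Fin.last s'
        · rw [if_pos hvv, if_pos (by rw [hvv]; rfl)]
        · rw [if_neg hvv, if_neg (fun hh => hvv (Fin.ext (by rw [hh]; rfl)))]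
      refine span_transfer p k (s'+1) _ _ (finRotate (s'+1)) (fun t v => ?_) hspan_a
      show (ζ t)^(p^(b + 2*((finRotate (s'+1)) v).val)) = _
      rw [hfinrot v, ← pow_mul, ← pow_succ]
      by_cases hvl : v.val = s'
      · rw [if_pos hvl]
        have he1 : b + 2*0 = 0 := by omega
        have he2 : (s'+1-1) % 2 + 2*v.val + 1 = 2*(s'+1) := by omega
        rw [he1, he2, hfix t, pow_zero, pow_one]
      · rw [if_neg hvl]
        congr 1
        congr 1
        omega

noncomputable def Tmap (b : ℕ) (ζ : Fin s → k) : (Fin s → W) →ₗ[W] (Fin s → W) where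
  toFun c := fun u => ∑ t, c t * teichmuller p ((ζ t)^(p^(b + 2*u.val)))
  map_add' c d := by
    funext u
    simp only [Pi.add_apply, add_mul]
    rw [Finset.sum_add_distrib]
  map_smul' a c := by
    funext u
    simp only [Pi.smul_apply, smul_eq_mul, RingHom.id_apply, Finset.mul_sum, mul_assoc]

lemma Tmap_surj (b : ℕ) (ζ : Fin s → k)
    (hspan : Submodule.span k
      (Set.range (fun t => fun u : Fin s => (ζ t)^(p^(b + 2*u.val)))) = ⊤) :
    Function.Surjective (Tmap p k s b ζ) := by
  apply surj_of_p_approx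
  intro x
  have hx : (fun u => ghostComponent 0 (x u)) ∈ Submodule.span k
      (Set.range (fun t => fun u : Fin s => (ζ t)^(p^(b + 2*u.val)))) := by rw [hspan]; trivial
  obtain ⟨c0, hc0⟩ := (Submodule.mem_span_range_iff_exists_fun k).1 hx
  set c : Fin s → W := fun t => teichmuller p (c0 t) with hcdef
  have hdvd : ∀ u, ∃ y, (x u - Tmap p k s b ζ c u) = p * y := by
    intro u
    apply pdvd_of_coeff_zero
    rw [← res_coeff]
    rw [map_sub]
    have h1 : ghostComponent 0 (Tmap p k s b ζ c u) = ghostComponent 0 (x u) := by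
      show ghostComponent 0 (∑ t, c t * teichmuller p ((ζ t)^(p^(b + 2*u.val)))) = _
      rw [map_sum]
      have h2 := congrFun hc0 u
      rw [Finset.sum_apply] at h2
      rw [← h2]
      refine Finset.sum_congr rfl fun t _ => ?_
      rw [map_mul, hcdef]
      rw [res_teich, res_teich, Pi.smul_apply, smul_eq_mul]
    rw [h1, sub_self]
  choose y hy using hdvd
  refine ⟨c, y, ?_⟩
  funext u
  have := hy u
  rw [Pi.add_apply, Pi.smul_apply, smul_eq_mul, ← this]
  ring

lemma Tmap_inj (b : ℕ) (ζ : Fin s → k)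
    (hspan : Submodule.span k
      (Set.range (fun t => fun u : Fin s => (ζ t)^(p^(b + 2*u.val)))) = ⊤) :
    Function.Injective (Tmap p k s b ζ) :=
  OrzechProperty.injective_of_surjective_endomorphism _ (Tmap_surj p k s b ζ hspan)

lemma cdphi_smul (a : W) (g : ZMod (2*s) → W) :
    CdPhi p k s (a • g) = frobenius a • CdPhi p k s g := by
  funext i
  simp only [cdphi_apply, Pi.smul_apply, smul_eq_mul, map_mul]
  ring

noncomputable def PhiC (ζ : Fin s → k) : (Fin s → W × W) →ₗ[W] (ZMod (2*s) → W) where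
  toFun c := ∑ t, ((c t).1 • vecSOL p k s (ζ t) + (c t).2 • vecT p k s (ζ t))
  map_add' c d := by
    funext i
    show (∑ t, (((c+d) t).1 • vecSOL p k s (ζ t) + ((c+d) t).2 • vecT p k s (ζ t))) i =
      (∑ t, ((c t).1 • vecSOL p k s (ζ t) + (c t).2 • vecT p k s (ζ t))) i +
      (∑ t, ((d t).1 • vecSOL p k s (ζ t) + (d t).2 • vecT p k s (ζ t))) i
    rw [Finset.sum_apply, Finset.sum_apply, Finset.sum_apply,
      ← Finset.sum_add_distrib]
    exact Finset.sum_congr rfl fun t _ => by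
      simp only [Pi.add_apply, Pi.smul_apply, smul_eq_mul, Prod.fst_add, Prod.snd_add]; ring
  map_smul' a c := by
    funext i
    show (∑ t, (((a • c) t).1 • vecSOL p k s (ζ t) + ((a • c) t).2 • vecT p k s (ζ t))) i =
      a * (∑ t, ((c t).1 • vecSOL p k s (ζ t) + (c t).2 • vecT p k s (ζ t))) i
    rw [Finset.sum_apply, Finset.sum_apply, Finset.mul_sum]
    exact Finset.sum_congr rfl fun t _ => by
      simp only [Pi.add_apply, Pi.smul_apply, smul_eq_mul, Prod.smul_fst, Prod.smul_snd]; ring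

lemma PhiC_def (ζ : Fin s → k) (c : Fin s → W × W) :
    PhiC p k s ζ c = ∑ t, ((c t).1 • vecSOL p k s (ζ t) + (c t).2 • vecT p k s (ζ t)) := rfl

lemma Tmap_apply (b : ℕ) (ζ : Fin s → k) (c : Fin s → W) (u : Fin s) :
    Tmap p k s b ζ c u = ∑ t, c t * teichmuller p ((ζ t)^(p^(b + 2*u.val))) := rfl

lemma PhiC_comm (hs : 2 ≤ s) (ζ : Fin s → k) (hfix : ∀ t, (ζ t)^(p^(2*s)) = (ζ t))
    (c : Fin s → W × W) :
    PhiC p k s ζ (fun t => Nphi p k (c t)) = CdPhi p k s (PhiC p k s ζ c) := by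
  rw [PhiC_def, PhiC_def, map_sum]
  refine Finset.sum_congr rfl fun t _ => ?_
  rw [map_add, cdphi_smul, cdphi_smul, step1 p k s hs _ (hfix t), step2 p k s hs _ (hfix t)]
  show ((p:W) * frobenius (c t).2) • vecSOL p k s (ζ t) + (frobenius (c t).1) • vecT p k s (ζ t) = _
  rw [smul_smul]
  funext i
  simp only [Pi.add_apply, Pi.smul_apply, smul_eq_mul]
  ring

lemma PhiC_apply_a (hs : 2 ≤ s) (ζ : Fin s → k) (c : Fin s → W × W) (i : ZMod (2*s))
    (hpar : i.val % 2 = (s-1) % 2) (u : Fin s) (hu : (s-1) % 2 + 2*u.val = i.val) :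
    PhiC p k s ζ c i = (p:W)^(Vfn s i.val) * Tmap p k s ((s-1) % 2) ζ (fun t => (c t).1) u := by
  rw [PhiC_def, Finset.sum_apply, Tmap_apply, Finset.mul_sum]
  refine Finset.sum_congr rfl fun t _ => ?_
  rw [Pi.add_apply, Pi.smul_apply, Pi.smul_apply, smul_eq_mul, smul_eq_mul]
  rw [vecSOL, vecT]
  rw [if_pos hpar, if_neg (show ¬(i.val % 2 = s % 2) by omega), mul_zero, add_zero, hu]
  ring

lemma PhiC_apply_b (hs : 2 ≤ s) (ζ : Fin s → k) (c : Fin s → W × W) (i : ZMod (2*s))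
    (hpar : i.val % 2 = s % 2) (u : Fin s) (hu : s % 2 + 2*u.val = i.val) :
    PhiC p k s ζ c i = (p:W)^(Vfn s i.val) * Tmap p k s (s % 2) ζ (fun t => (c t).2) u := by
  rw [PhiC_def, Finset.sum_apply, Tmap_apply, Finset.mul_sum]
  refine Finset.sum_congr rfl fun t _ => ?_
  rw [Pi.add_apply, Pi.smul_apply, Pi.smul_apply, smul_eq_mul, smul_eq_mul]
  rw [vecSOL, vecT]
  rw [if_pos hpar, if_neg (show ¬(i.val % 2 = (s-1) % 2) by omega), mul_zero, zero_add, hu]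
  ring

lemma PhiC_inj (hs : 2 ≤ s) (ζ : Fin s → k)
    (hspan : ∀ b : ℕ, b ≤ 1 → Submodule.span k
      (Set.range (fun t => fun u : Fin s => (ζ t)^(p^(b + 2*u.val)))) = ⊤) :
    Function.Injective (PhiC p k s ζ) := by
  haveI : NeZero (2*s) := ⟨by omega⟩
  rw [injective_iff_map_eq_zero]
  intro c hc
  have hppow : ∀ m : ℕ, ((p:W))^m ≠ 0 := fun m => pow_ne_zero m (p_ne_zero p k)
  have h1 : Tmap p k s ((s-1) % 2) ζ (fun t => (c t).1) = 0 := by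
    funext u
    have hval : (((s-1) % 2 + 2*u.val : ℕ) : ZMod (2*s)).val = (s-1) % 2 + 2*u.val :=
      ZMod.val_cast_of_lt (by have := u.isLt; omega)
    have := congrFun hc (((s-1) % 2 + 2*u.val : ℕ) : ZMod (2*s))
    rw [PhiC_apply_a p k s hs ζ c _ (by omega) u (by omega)] at this
    rw [Pi.zero_apply] at this ⊢
    exact (mul_eq_zero.1 this).resolve_left (hppow _)
  have h2 : Tmap p k s (s % 2) ζ (fun t => (c t).2) = 0 := by
    funext u
    have hval : ((s % 2 + 2*u.val : ℕ) : ZMod (2*s)).val = s % 2 + 2*u.val :=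
      ZMod.val_cast_of_lt (by have := u.isLt; omega)
    have := congrFun hc ((s % 2 + 2*u.val : ℕ) : ZMod (2*s))
    rw [PhiC_apply_b p k s hs ζ c _ (by omega) u (by omega)] at this
    rw [Pi.zero_apply] at this ⊢
    exact (mul_eq_zero.1 this).resolve_left (hppow _)
  have hc1 := Tmap_inj p k s _ ζ (hspan _ (by omega)) (h1.trans (map_zero _).symm)
  have hc2 := Tmap_inj p k s _ ζ (hspan _ (by omega)) (h2.trans (map_zero _).symm)
  funext t
  exact Prod.ext (congrFun hc1 t) (congrFun hc2 t)

lemma PhiC_range (hs : 2 ≤ s) (ζ : Fin s → k)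
    (hspan : ∀ b : ℕ, b ≤ 1 → Submodule.span k
      (Set.range (fun t => fun u : Fin s => (ζ t)^(p^(b + 2*u.val)))) = ⊤)
    (g : ZMod (2*s) → W) (hg : ∀ i, ∃ y, g i = (p:W)^(Vfn s i.val) * y) :
    ∃ c, PhiC p k s ζ c = g := by
  haveI : NeZero (2*s) := ⟨by omega⟩
  choose z hz using hg
  obtain ⟨c1, hc1⟩ := Tmap_surj p k s _ ζ (hspan ((s-1) % 2) (by omega))
    (fun u => z ((((s-1) % 2 + 2*u.val : ℕ)) : ZMod (2*s)))
  obtain ⟨c2, hc2⟩ := Tmap_surj p k s _ ζ (hspan (s % 2) (by omega))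
    (fun u => z (((s % 2 + 2*u.val : ℕ)) : ZMod (2*s)))
  refine ⟨fun t => (c1 t, c2 t), ?_⟩
  funext i
  have hlt : i.val < 2*s := ZMod.val_lt i
  have hcast : ((i.val : ℕ) : ZMod (2*s)) = i := ZMod.natCast_rightInverse i
  by_cases hpar : i.val % 2 = (s-1) % 2
  · set u : Fin s := ⟨(i.val - (s-1) % 2)/2, by omega⟩ with hudef
    have hu : (s-1) % 2 + 2*u.val = i.val := by rw [hudef]; show (s-1)%2 + 2*((i.val - (s-1)%2)/2) = i.val; omega
    rw [PhiC_apply_a p k s hs ζ _ i hpar u hu, congrFun hc1 u]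
    have : ((((s-1) % 2 + 2*u.val : ℕ)) : ZMod (2*s)) = i := by rw [hu, hcast]
    rw [this, ← hz i]
  · set u : Fin s := ⟨(i.val - s % 2)/2, by omega⟩ with hudef
    have hu : s % 2 + 2*u.val = i.val := by rw [hudef]; show s%2 + 2*((i.val - s%2)/2) = i.val; omega
    rw [PhiC_apply_b p k s hs ζ _ i (by omega) u hu, congrFun hc2 u]
    have : (((s % 2 + 2*u.val : ℕ)) : ZMod (2*s)) = i := by rw [hu, hcast]
    rw [this, ← hz i]

lemma one_ne_p_mul (x : W) : (1 : W) ≠ p * x := by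
  intro h
  have h2 := congrArg (ghostComponent 0) h
  rw [map_one, map_mul, res_p, zero_mul] at h2
  simp at h2

lemma cdphi_iter_dvd (hs : 2 ≤ s) (n : ℕ) (hn : n ≤ s-1) (g : ZMod (2*s) → W)
    (i : ZMod (2*s)) :
    (p:W)^(if s ≤ i.val then min n (i.val - s) else n - i.val) ∣
      ((⇑(CdPhi p k s))^[n] g) i := by
  haveI : NeZero (2*s) := ⟨by omega⟩
  induction n generalizing i with
  | zero =>
    rw [show (if s ≤ i.val then min 0 (i.val-s) else 0 - i.val) = 0 by split_ifs <;> omega,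
      pow_zero]
    exact one_dvd _
  | succ n IH =>
    rw [Function.iterate_succ_apply', cdphi_apply]
    have hlt : i.val < 2*s := ZMod.val_lt i
    have hlt2 : (i-1 : ZMod (2*s)).val < 2*s := ZMod.val_lt _
    have hsub := zsub1 s (by omega) i
    obtain ⟨y, hy⟩ := IH (by omega) (i-1)
    rw [hy, map_mul, map_pow, map_natCast]
    rw [show (if (i-1 : ZMod (2*s)).val < s then (1:W) else (p:W)) =
      (p:W)^(if (i-1 : ZMod (2*s)).val < s then 0 else 1) by
        split_ifs with h
        · rw [pow_zero]
        · rw [pow_one]]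
    rw [← mul_assoc, ← pow_add]
    refine dvd_mul_of_dvd_left (pow_dvd_pow _ ?_) _
    by_cases h0 : i.val = 0
    · rw [if_pos h0] at hsub
      rw [hsub] at *
      split_ifs <;> omega
    · rw [if_neg h0] at hsub
      rw [hsub] at *
      split_ifs <;> omega

lemma Vle (hs : 2 ≤ s) (i : ZMod (2*s)) :
    Vfn s i.val ≤ (if s ≤ i.val then min (s-1) (i.val - s) else (s-1) - i.val) := by
  haveI : NeZero (2*s) := ⟨by omega⟩
  have hlt : i.val < 2*s := ZMod.val_lt i
  simp only [Vfn]
  split_ifs <;> omega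

lemma cdphi_iter_single (hs : 2 ≤ s) (n t : ℕ) (h : t + n ≤ s) :
    (⇑(CdPhi p k s))^[n] (fun j => if j = ((t : ℕ) : ZMod (2*s)) then (1:W) else 0) =
      (fun j => if j = (((t + n : ℕ)) : ZMod (2*s)) then (1:W) else 0) := by
  haveI : NeZero (2*s) := ⟨by omega⟩
  induction n with
  | zero => simp
  | succ n IH =>
    rw [Function.iterate_succ_apply', IH (by omega)]
    funext i
    rw [cdphi_apply]
    have hcast : ((t + n : ℕ) : ZMod (2*s)) + 1 = ((t + (n+1) : ℕ) : ZMod (2*s)) := by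
      push_cast; ring
    have hiff : (i - 1 = ((t + n : ℕ) : ZMod (2*s))) ↔ i = ((t + (n+1) : ℕ) : ZMod (2*s)) := by
      constructor
      · intro hh
        have := congrArg (· + 1) hh
        simp only [sub_add_cancel] at this
        rw [this, hcast]
      · intro hh
        rw [hh, ← hcast]
        ring
    by_cases hi : i = ((t + (n+1) : ℕ) : ZMod (2*s))
    · rw [if_pos hi, if_pos (hiff.2 hi), map_one, mul_one]
      have hval : (i - 1 : ZMod (2*s)).val = t + n := by
        rw [hiff.2 hi, ZMod.val_cast_of_lt (by omega)]
      rw [if_pos (show (i-1 : ZMod (2*s)).val < s by rw [hval]; omega)]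
    · rw [if_neg hi, if_neg (fun hh => hi (hiff.1 hh)), map_zero, mul_zero]

lemma mem_qembed (d : ℕ) (hs : 2 ≤ s) (hsd : s ≤ d) :
    QEmbed p k ((ZMod (2 * s) → W) × (Fin (d - s) → W × W)) d
      (AddMonoidHom.prodMap (CdPhi p k s) (NdPhi p k (d - s))) (s - 1) := by
  obtain ⟨ζ, hfix, hspan⟩ := exists_zeta p k s hs
  set φ := AddMonoidHom.prodMap (CdPhi p k s) (NdPhi p k (d - s)) with hφ
  set r1 : (Fin d → W × W) →ₗ[W] (Fin s → W × W) :=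
    LinearMap.funLeft W (W × W) (Fin.castLE hsd) with hr1
  set r2 : (Fin d → W × W) →ₗ[W] (Fin (d-s) → W × W) :=
    LinearMap.funLeft W (W × W) (fun r : Fin (d-s) => (⟨s + r.val, by omega⟩ : Fin d)) with hr2
  refine ⟨LinearMap.prod ((PhiC p k s ζ).comp r1) r2, ?_, ?_, ?_⟩
  · rw [injective_iff_map_eq_zero]
    intro f hf
    have hf1 : PhiC p k s ζ (r1 f) = 0 := congrArg Prod.fst hf
    have hf2 : r2 f = 0 := congrArg Prod.snd hf
    have hr1f : r1 f = 0 := PhiC_inj p k s hs ζ hspan (hf1.trans (map_zero _).symm)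
    funext i
    by_cases hi : i.val < s
    · have : f (Fin.castLE hsd ⟨i.val, hi⟩) = 0 := congrFun hr1f ⟨i.val, hi⟩
      rwa [show Fin.castLE hsd ⟨i.val, hi⟩ = i from Fin.ext rfl] at this
    · show f i = 0
      have h5 : f (⟨s + (i.val - s), by omega⟩ : Fin d) = 0 := by
        have := congrFun hf2 ⟨i.val - s, by omega⟩
        rw [Pi.zero_apply] at this
        exact this
      rw [show i = (⟨s + (i.val - s), by omega⟩ : Fin d) from Fin.ext (by
        show i.val = s + (i.val - s); omega)]
      exact h5
  · intro x
    refine Prod.ext ?_ ?_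
    · show PhiC p k s ζ (r1 (NdPhi p k d x)) = CdPhi p k s (PhiC p k s ζ (r1 x))
      have : r1 (NdPhi p k d x) = fun t => Nphi p k ((r1 x) t) := rfl
      rw [this, PhiC_comm p k s hs ζ hfix]
    · show r2 (NdPhi p k d x) = NdPhi p k (d - s) (r2 x)
      rfl
  · intro m
    have hdvd : ∀ i, ∃ y, ((⇑(CdPhi p k s))^[s-1] m.1) i = (p:W)^(Vfn s i.val) * y := by
      intro i
      have h1 := cdphi_iter_dvd p k s hs (s-1) (le_refl _) m.1 i
      have h2 := pow_dvd_pow (p:W) (Vle s hs i)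
      exact h2.trans h1
    obtain ⟨c, hc⟩ := PhiC_range p k s hs ζ hspan _ hdvd
    set f : Fin d → W × W := fun i =>
      if hlt : i.val < s then c ⟨i.val, hlt⟩
      else ((⇑(NdPhi p k (d-s)))^[s-1] m.2) ⟨i.val - s, by omega⟩ with hfdef
    refine ⟨f, ?_⟩
    have hiter : (⇑φ)^[s-1] m =
        ((⇑(CdPhi p k s))^[s-1] m.1, (⇑(NdPhi p k (d-s)))^[s-1] m.2) := by
      rw [hφ, AddMonoidHom.coe_prodMap, Prod.map_iterate]
      rfl
    rw [hiter]
    refine Prod.ext ?_ ?_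
    · show PhiC p k s ζ (r1 f) = _
      have : r1 f = c := by
        funext t
        show f (Fin.castLE hsd t) = c t
        rw [hfdef]
        dsimp only
        rw [dif_pos (show (Fin.castLE hsd t).val < s from t.isLt)]
        exact congrArg c (Fin.ext rfl)
      rw [this, hc]
    · show r2 f = _
      funext r
      show f ⟨s + r.val, by omega⟩ = _
      rw [hfdef]
      dsimp only
      rw [dif_neg (by omega : ¬ (s + r.val < s))]
      apply congrArg
      apply Fin.ext
      show s + r.val - s = r.val
      omega

lemma lower_bound (d : ℕ) (hs : 2 ≤ s) (hsd : s ≤ d) (q : ℕ) (hq : q ≤ s-2)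
    (h : QEmbed p k ((ZMod (2 * s) → W) × (Fin (d - s) → W × W)) d
      (AddMonoidHom.prodMap (CdPhi p k s) (NdPhi p k (d - s))) q) : False := by
  haveI : NeZero (2*s) := ⟨by omega⟩
  obtain ⟨j, hinj, hcomm, hsurj⟩ := h
  set φ := AddMonoidHom.prodMap (CdPhi p k s) (NdPhi p k (d - s)) with hφ
  set m0 : (ZMod (2 * s) → W) × (Fin (d - s) → W × W) :=
    ((fun i => if i = (((s-2-q : ℕ)) : ZMod (2*s)) then (1:W) else 0), 0) with hm0
  have hiter : (⇑φ)^[q] m0 =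
      ((fun i => if i = (((s-2 : ℕ)) : ZMod (2*s)) then (1:W) else 0), 0) := by
    rw [hφ, AddMonoidHom.coe_prodMap, Prod.map_iterate]
    refine Prod.ext ?_ ?_
    · show (⇑(CdPhi p k s))^[q] m0.1 = _
      rw [hm0]
      have := cdphi_iter_single p k s hs q (s-2-q) (by omega)
      rw [this]
      rw [show s-2-q+q = s-2 by omega]
    · show (⇑(NdPhi p k (d-s)))^[q] m0.2 = 0
      rw [hm0]
      exact Function.iterate_fixed (map_zero _) q
  obtain ⟨f, hf⟩ := hsurj m0
  rw [hiter] at hf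
  set g : Fin d → W × W := fun t =>
    (frobenius (frobenius ((f t).1)), frobenius (frobenius ((f t).2))) with hg
  have hNd : NdPhi p k d (NdPhi p k d f) = (p:W) • g := by
    funext t
    show Nphi p k (Nphi p k (f t)) = ((p:W) • g) t
    refine Prod.ext ?_ ?_
    · show (p:W) * frobenius (frobenius ((f t).1)) = (((p:W) • g) t).1
      rw [Pi.smul_apply, Prod.smul_fst, smul_eq_mul, hg]
    · show frobenius ((p:W) * frobenius ((f t).2)) = (((p:W) • g) t).2
      rw [map_mul, map_natCast, Pi.smul_apply, Prod.smul_snd, smul_eq_mul, hg]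
  have h2 : j (NdPhi p k d (NdPhi p k d f)) = φ (φ (j f)) := by
    rw [hcomm, hcomm]
  rw [hNd, map_smul, hf] at h2
  have hC2 : CdPhi p k s (CdPhi p k s
      (fun i => if i = (((s-2 : ℕ)) : ZMod (2*s)) then (1:W) else 0)) =
      (fun i => if i = (((s : ℕ)) : ZMod (2*s)) then (1:W) else 0) := by
    have := cdphi_iter_single p k s hs 2 (s-2) (by omega)
    rw [show s-2+2 = s by omega] at this
    exact this
  have h3 := congrFun (congrArg Prod.fst h2) ((s : ℕ) : ZMod (2*s))
  have hleft : (φ (φ ((fun i => if i = (((s-2 : ℕ)) : ZMod (2*s)) then (1:W) else 0),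
      (0 : Fin (d-s) → W × W)))).1 ((s : ℕ) : ZMod (2*s)) = 1 := by
    show CdPhi p k s (CdPhi p k s
      (fun i => if i = (((s-2 : ℕ)) : ZMod (2*s)) then (1:W) else 0)) ((s : ℕ) : ZMod (2*s)) = 1
    rw [hC2]
    exact if_pos rfl
  rw [hleft] at h3
  have h4 : ((p:W) • j g).1 ((s : ℕ) : ZMod (2*s)) = p * ((j g).1 ((s : ℕ) : ZMod (2*s))) := by
    rw [Prod.smul_fst, Pi.smul_apply, smul_eq_mul]
  rw [h4] at h3
  exact one_ne_p_mul p k _ h3.symm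

theorem q_of_cs_sum' (d : ℕ) (hs2 : 2 ≤ s) (hsd : s ≤ d) :
    IsLeast {q : ℕ | QEmbed p k
        ((ZMod (2 * s) → WittVector p k) × (Fin (d - s) → WittVector p k × WittVector p k)) d
        (AddMonoidHom.prodMap (CdPhi p k s) (NdPhi p k (d - s))) q} (s - 1) ∧
    IsLeast {q : ℕ | QEmbed p k (Fin d → WittVector p k × WittVector p k) d (NdPhi p k d) q}
      0 := by
  constructor
  · constructor
    · exact mem_qembed p k s d hs2 hsd
    · intro q hq
      by_contra hlt
      push_neg at hlt
      exact lower_bound p k s d hs2 hsd q (by omega) hq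
  · constructor
    · exact ⟨LinearMap.id, fun a b h => h, fun x => rfl, fun m => ⟨m, rfl⟩⟩
    · intro q _
      exact Nat.zero_le q

end S2
end Aux

variable (p : ℕ) [Fact p.Prime] (k : Type) [Field k] [IsAlgClosed k] [CharP k p]


/-- **Remark 3.4.** If `2 ≤ s ≤ d` and `(M, φ) = C_s × N^(d-s)`, then `q = s - 1`; together
with `q = 0` for `N^d`, the invariant `q` takes every value in `{0, …, d-1}`. -/
theorem q_of_cs_sum (d s : ℕ) (hs2 : 2 ≤ s) (hsd : s ≤ d) :
    IsLeast {q : ℕ | QEmbed p k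
        ((ZMod (2 * s) → WittVector p k) × (Fin (d - s) → WittVector p k × WittVector p k)) d
        (AddMonoidHom.prodMap (CdPhi p k s) (NdPhi p k (d - s))) q} (s - 1) ∧
    IsLeast {q : ℕ | QEmbed p k (Fin d → WittVector p k × WittVector p k) d (NdPhi p k d) q} 0 :=
  q_of_cs_sum' p k s d hs2 hsd
end

section
/- Let d ≥ 1 and let (M, φ) be a supersingular Dieudonné module over k with M free of rank 2d, with invariant q (the smallest non-negative integer such that there exists an injective W(k)-linear map j : N^d → M with j∘φ_N = φ∘j and φ^q(M) ⊆ j(N^d)). Then the smallest κ ∈ ℕ ∪ {0} such that there exists an injective W(k)-linear map j : N^d → M with j∘φ_N = φ∘j and p^κ·M ⊆ j(N^d) is equal to ⌈q/2⌉. (Equivalently, ⌈q/2⌉ is the smallest number such that p^{⌈q/2⌉} annihilates N^d/φ_N^q(N^d); in p-divisible group terms, it is the smallest κ such that there exists an isogeny H → E^d whose kernel is annihilated by p^κ.) -/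
open WittVector

set_option linter.unusedSectionVars false

section AuxLemmas

variable (p : ℕ) [Fact p.Prime] (k : Type) [Field k] [IsAlgClosed k] [CharP k p]

lemma frob_pow_p_s14 (s : ℕ) (x : WittVector p k) :
    WittVector.frobenius ((p : WittVector p k)^s * x)
      = (p : WittVector p k)^s * WittVector.frobenius x := by
  rw [map_mul, map_pow, map_natCast]

/-- Iterates of a Frobenius-semilinear map commute with `p^s •`. -/
lemma phi_iter_pow_smul {M : Type} [AddCommGroup M] [Module (WittVector p k) M]
    {φ : M →+ M} (hsemi : IsFrobSemilinear p k M φ) (s t : ℕ) (m : M) :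
    (⇑φ)^[t] ((p : WittVector p k)^s • m) = (p : WittVector p k)^s • (⇑φ)^[t] m := by
  induction t generalizing m with
  | zero => simp
  | succ t ih =>
      rw [Function.iterate_succ_apply, Function.iterate_succ_apply]
      rw [hsemi, map_pow, map_natCast, ih]

/-- Intertwining passes to iterates. -/
lemma j_iter {M : Type} [AddCommGroup M] [Module (WittVector p k) M] {d : ℕ}
    {φ : M →+ M} {j : (Fin d → WittVector p k × WittVector p k) →ₗ[WittVector p k] M}
    (hcomm : ∀ x, j (NdPhi p k d x) = φ (j x)) (t : ℕ)
    (x : Fin d → WittVector p k × WittVector p k) :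
    j ((⇑(NdPhi p k d))^[t] x) = (⇑φ)^[t] (j x) := by
  induction t generalizing x with
  | zero => simp
  | succ t ih =>
      rw [Function.iterate_succ_apply, Function.iterate_succ_apply, ih, hcomm]

lemma Nphi_apply (ab : WittVector p k × WittVector p k) :
    Nphi p k ab = ((p : WittVector p k) * WittVector.frobenius ab.2,
      WittVector.frobenius ab.1) := rfl

lemma Nphi_sq (ab : WittVector p k × WittVector p k) :
    Nphi p k (Nphi p k ab)
      = ((p : WittVector p k) * WittVector.frobenius (WittVector.frobenius ab.1),
         (p : WittVector p k) * WittVector.frobenius (WittVector.frobenius ab.2)) := by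
  rw [Nphi_apply, Nphi_apply]
  simp only [map_mul, map_natCast]

lemma NdPhi_apply (d : ℕ) (x : Fin d → WittVector p k × WittVector p k) (i : Fin d) :
    NdPhi p k d x i = Nphi p k (x i) := rfl

/-- Explicit formula for even iterates of `φ_N` on `N^d`. -/
lemma NdPhi_iter (d n : ℕ) (x : Fin d → WittVector p k × WittVector p k) :
    (⇑(NdPhi p k d))^[2*n] x
      = fun i => ((p : WittVector p k)^n
            * (⇑(WittVector.frobenius : WittVector p k →+* WittVector p k))^[2*n] (x i).1,
          (p : WittVector p k)^n
            * (⇑(WittVector.frobenius : WittVector p k →+* WittVector p k))^[2*n] (x i).2) := by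
  induction n generalizing x with
  | zero => funext i; simp
  | succ n ih =>
      have h2 : 2*(n+1) = 2 + 2*n := by ring
      rw [h2, Function.iterate_add_apply, ih]
      have hit2 : ∀ y : Fin d → WittVector p k × WittVector p k,
          (⇑(NdPhi p k d))^[2] y = NdPhi p k d (NdPhi p k d y) := fun y => rfl
      rw [hit2]
      funext i
      rw [NdPhi_apply, NdPhi_apply, Nphi_sq]
      have hfit : ∀ a : WittVector p k,
          (⇑(WittVector.frobenius : WittVector p k →+* WittVector p k))^[2+2*n] a
            = WittVector.frobenius (WittVector.frobenius
                ((⇑(WittVector.frobenius : WittVector p k →+* WittVector p k))^[2*n] a)) := by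
        intro a
        rw [Function.iterate_add_apply]
        rfl
      rw [hfit, hfit]
      simp only [frob_pow_p_s14]
      rw [Prod.mk.injEq]
      constructor <;> ring

/-- Inverse Frobenius iterates cancel Frobenius iterates. -/
lemma frob_iter_cancel (t : ℕ) (a : WittVector p k) :
    (⇑(WittVector.frobenius : WittVector p k →+* WittVector p k))^[t]
      ((⇑(WittVector.frobeniusEquiv p k).symm)^[t] a) = a := by
  have h1 : (⇑(WittVector.frobenius : WittVector p k →+* WittVector p k))
      = ⇑(WittVector.frobeniusEquiv p k) := by
    funext x
    rw [WittVector.frobeniusEquiv_apply]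
  rw [h1]
  exact Function.LeftInverse.iterate (RingEquiv.apply_symm_apply _) t a

/-- `φ` is injective: its image contains `p·M`, so its "linearization" has nonzero
determinant. -/
lemma phi_injective {M : Type} [AddCommGroup M] [Module (WittVector p k) M]
    [Module.Free (WittVector p k) M] [Module.Finite (WittVector p k) M]
    {φ : M →+ M} (hφ : IsDieudonne p k M φ) : Function.Injective ⇑φ := by
  classical
  obtain ⟨hsemi, hdiv⟩ := hφ
  set W := WittVector p k
  let b := Module.Free.chooseBasis W M
  set ι := Module.Free.ChooseBasisIndex W M
  set A : Matrix ι ι W := Matrix.of fun i j => b.repr (φ (b j)) i with hA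
  -- key coordinate formula
  have key : ∀ (m : M) (i : ι),
      b.repr (φ m) i = ∑ l, A i l * WittVector.frobenius (b.repr m l) := by
    intro m i
    conv_lhs => rw [← b.sum_repr m]
    rw [map_sum]
    have : ∀ l : ι, φ ((b.repr m l) • b l)
        = WittVector.frobenius (b.repr m l) • φ (b l) := fun l => hsemi _ _
    rw [Finset.sum_congr rfl fun l _ => this l]
    rw [map_sum]
    rw [Finsupp.finset_sum_apply]
    refine Finset.sum_congr rfl fun l _ => ?_
    rw [map_smul, Finsupp.smul_apply, smul_eq_mul, mul_comm]
    rfl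
  choose u hu using fun i : ι => hdiv (b i)
  set B : Matrix ι ι W := Matrix.of fun l j => WittVector.frobenius (b.repr (u j) l) with hB
  have hAB : A * B = (p : W) • (1 : Matrix ι ι W) := by
    refine Matrix.ext fun i j => ?_
    rw [Matrix.mul_apply]
    have hk2 := (key (u j) i).symm
    simp only [hB, Matrix.of_apply]
    rw [hk2, hu, map_smul, Finsupp.smul_apply, smul_eq_mul]
    rw [Matrix.smul_apply, Matrix.one_apply, b.repr_self, Finsupp.single_apply, smul_eq_mul]
    by_cases h : i = j
    · subst h; simp
    · rw [if_neg (fun hh => h hh.symm), if_neg h]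
  have hdet : A.det ≠ 0 := by
    have hmul : A.det * B.det = ((p : W) • (1 : Matrix ι ι W)).det := by
      rw [← Matrix.det_mul, hAB]
    have hps : ((p : W) • (1 : Matrix ι ι W)).det = (p : W) ^ (Fintype.card ι) := by
      rw [Matrix.det_smul, Matrix.det_one, mul_one]
    have hne : ((p : W) • (1 : Matrix ι ι W)).det ≠ 0 := by
      rw [hps]
      exact pow_ne_zero _ (WittVector.p_nonzero p k)
    intro h0
    rw [h0, zero_mul] at hmul
    exact hne hmul.symm
  -- now injectivity
  have hker : ∀ m : M, φ m = 0 → m = 0 := by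
    intro m hm
    set v : ι → W := fun l => WittVector.frobenius (b.repr m l) with hv
    have hAv : A.mulVec v = 0 := by
      funext i
      have := key m i
      rw [hm] at this
      simp only [map_zero, Finsupp.coe_zero, Pi.zero_apply] at this
      rw [Matrix.mulVec, Pi.zero_apply]
      exact (this.symm : ∑ l, A i l * v l = 0)
    have hdv : A.det • v = 0 := by
      have := congrArg (fun w => A.adjugate.mulVec w) hAv
      simp only [Matrix.mulVec_mulVec, Matrix.adjugate_mul, Matrix.mulVec_zero] at this
      rwa [Matrix.mulVec_mulVec, Matrix.adjugate_mul, Matrix.smul_mulVec, Matrix.one_mulVec] at this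
    have hv0 : ∀ l, v l = 0 := by
      intro l
      have : A.det * v l = 0 := congrFun hdv l
      rcases mul_eq_zero.mp this with h | h
      · exact absurd h hdet
      · exact h
    have hinj : Function.Injective (WittVector.frobenius : W → W) :=
      (WittVector.frobenius_bijective p k).injective
    have hl : ∀ l, (b.repr m) l = 0 := fun l =>
      hinj ((hv0 l).trans (map_zero _).symm)
    have hrepr0 : b.repr m = 0 := by
      refine Finsupp.ext fun l => ?_
      rw [Finsupp.zero_apply]
      exact hl l
    have := congrArg b.repr.symm hrepr0
    simpa using this
  intro m1 m2 h
  have : φ (m1 - m2) = 0 := by rw [map_sub, h, sub_self]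
  have := hker _ this
  exact sub_eq_zero.mp this

end AuxLemmas

variable (p : ℕ) [Fact p.Prime] (k : Type) [Field k] [IsAlgClosed k] [CharP k p]


/-- **Remark 2.6.** The smallest `κ` such that there is a monomorphism
`j : (N^d, φ_N) ↪ (M, φ)` with `p^κ·M ⊆ j(N^d)` (equivalently: an isogeny `H → E^d` whose
kernel is annihilated by `p^κ`) is `⌈q/2⌉`. -/
theorem kappa_eq_ceil_q_half (d : ℕ) (hd : 1 ≤ d)
    (M : Type) [AddCommGroup M] [Module (WittVector p k) M]
    [Module.Free (WittVector p k) M] [Module.Finite (WittVector p k) M]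
    (hrank : Module.finrank (WittVector p k) M = 2 * d)
    (φ : M →+ M) (hφ : IsDieudonne p k M φ) (hss : IsSupersingular p k M φ)
    (q : ℕ) (hq : IsLeast {s : ℕ | QEmbed p k M d φ s} q) :
    IsLeast {κ : ℕ | ∃ j : (Fin d → WittVector p k × WittVector p k) →ₗ[WittVector p k] M,
        Function.Injective j ∧ (∀ x, j (NdPhi p k d x) = φ (j x)) ∧
        ∀ m : M, ((p : WittVector p k)^κ) • m ∈ Set.range j} ((q + 1) / 2) := by
  set W := WittVector p k
  have hqmem := hq.1
  unfold QEmbed at hqmem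
  obtain ⟨j, hjinj, hjcomm, hjq⟩ := hqmem
  have hphiinj : Function.Injective ⇑φ := phi_injective p k hφ
  constructor
  · -- membership : p^⌈q/2⌉ M ⊆ range j for the same j
    refine ⟨j, hjinj, hjcomm, fun m => ?_⟩
    set n := (q + 1) / 2 with hn
    have h2nq : 2 * n - q + q = 2 * n := by omega
    obtain ⟨x0, hx0⟩ := hjq m
    set x : Fin d → W × W := (⇑(NdPhi p k d))^[2*n - q] x0 with hx
    have hphi2n : (⇑φ)^[2*n] m = j x := by
      calc (⇑φ)^[2*n] m = (⇑φ)^[2*n - q + q] m := by rw [h2nq]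
        _ = (⇑φ)^[2*n - q] ((⇑φ)^[q] m) := Function.iterate_add_apply _ _ _ _
        _ = (⇑φ)^[2*n - q] (j x0) := by rw [hx0]
        _ = j x := (j_iter p k hjcomm _ _).symm
    set w : Fin d → W × W := fun i =>
      ((⇑(WittVector.frobeniusEquiv p k).symm)^[2*n] (x i).1,
       (⇑(WittVector.frobeniusEquiv p k).symm)^[2*n] (x i).2) with hw
    have hNw : (⇑(NdPhi p k d))^[2*n] w = (p : W)^n • x := by
      rw [NdPhi_iter]
      funext i
      simp only [hw, frob_iter_cancel, Pi.smul_apply, Prod.smul_mk, smul_eq_mul, Prod.smul_def]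
    have hchain : (⇑φ)^[2*n] (j w) = (⇑φ)^[2*n] ((p : W)^n • m) := by
      rw [← j_iter p k hjcomm, hNw, map_smul, ← hphi2n,
        phi_iter_pow_smul p k hφ.1]
    exact ⟨w, (hphiinj.iterate (2*n)) hchain⟩
  · -- lower bound
    intro κ hκ
    obtain ⟨j', hinj', hcomm', hk'⟩ := hκ
    have h2κ : QEmbed p k M d φ (2*κ) := by
      refine ⟨j', hinj', hcomm', fun m => ?_⟩
      obtain ⟨x, hx⟩ := hk' m
      set Tx : Fin d → W × W := fun i =>
        ((⇑(WittVector.frobenius : W →+* W))^[2*κ] (x i).1,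
         (⇑(WittVector.frobenius : W →+* W))^[2*κ] (x i).2) with hTx
      have hsmul : (fun i => ((p : W)^κ
              * (⇑(WittVector.frobenius : W →+* W))^[2*κ] (x i).1,
            (p : W)^κ * (⇑(WittVector.frobenius : W →+* W))^[2*κ] (x i).2))
          = (p : W)^κ • Tx := by
        funext i
        simp only [hTx, Pi.smul_apply, Prod.smul_def, smul_eq_mul]
      have e1 : (⇑φ)^[2*κ] (j' x) = (p : W)^κ • j' Tx := by
        rw [← j_iter p k hcomm', NdPhi_iter, hsmul, map_smul]
      have e2 : (⇑φ)^[2*κ] (j' x) = (p : W)^κ • (⇑φ)^[2*κ] m := by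
        rw [hx, phi_iter_pow_smul p k hφ.1]
      have hcancel : (⇑φ)^[2*κ] m = j' Tx := by
        have heq : (p : W)^κ • (⇑φ)^[2*κ] m = (p : W)^κ • j' Tx := by
          rw [← e2, e1]
        exact smul_right_injective M (pow_ne_zero κ (WittVector.p_nonzero p k)) heq
      exact ⟨Tx, hcancel.symm⟩
    have hle : q ≤ 2*κ := hq.2 h2κ
    omega
end
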